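/- arXiv:2312.03010 — 13 statements merged into one kernel-verified Lean document; each statement's English description precedes it below -/
import Mathlib

section
/- Let p be a prime, n ≥ 2, and 2 ≤ j ≤ n. Let N be the number of finsets A of vectors in (Fin n → ZMod p) with A.card = j+1 such that A is not linearly independent over ZMod p but every proper subset of A is linearly independent (in particular all elements of A are nonzero). Then N · (j+1)! = (p^n − 1)(p^n − p)⋯(p^n − p^{j−1}) · (p−1)^j, i.e., N · (j+1)! = (∏_{t=0}^{j−1} (p^n − p^t)) · (p−1)^j. -/
/-!
Order the `j + 1` vectors of a minimal nonsimplex as a tuple `(f₁, …, f_j, x)`, the extra vector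
`x` sitting at the index `none` of `Option (Fin j)`: every set arises from exactly `(j + 1)!`
injective tuples. Such a tuple has a minimal nonsimplex as its image iff `f` is linearly
independent and `x = ∑ cᵢ fᵢ` with every `cᵢ ≠ 0`; since `x` determines `c`, the ordered count is
`#{independent j-tuples} · (p - 1)^j = ∏_{t<j} (p^n - p^t) · (p - 1)^j`. Injectivity of the tuple
is automatic once there are three vectors, as any two of them lie in an independent subfamily.
-/

open Finset Submodule

section Counting

variable {ι α : Type*} [Fintype ι] [DecidableEq α]

theorem card_injective_with_image_eq (A : Finset α) (hA : A.card = Fintype.card ι) :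
    Nat.card {v : ι → α // Function.Injective v ∧ univ.image v = A} =
      (Fintype.card ι).factorial := by
  classical
  have hbij : Function.Bijective fun e : ι ≃ A =>
      (⟨Subtype.val ∘ e, Subtype.val_injective.comp e.injective, by
        ext x
        simp only [mem_image, mem_univ, true_and, Function.comp_apply]
        exact ⟨fun ⟨i, hi⟩ => hi ▸ (e i).2, fun hx => ⟨e.symm ⟨x, hx⟩, by simp⟩⟩⟩ :
        {v : ι → α // Function.Injective v ∧ univ.image v = A}) := by
    refine ⟨fun e e' h => Equiv.ext fun i => Subtype.ext (congrFun (congrArg Subtype.val h) i), ?_⟩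
    rintro ⟨v, hv, rfl⟩
    refine ⟨Equiv.ofBijective (fun i => ⟨v i, mem_image_of_mem v (mem_univ i)⟩) ?_, rfl⟩
    rw [Fintype.bijective_iff_injective_and_card]
    exact ⟨fun i i' h => hv (congrArg Subtype.val h), by simp [hA]⟩
  rw [← Nat.card_eq_of_bijective _ hbij, Nat.card_eq_fintype_card,
    Fintype.card_equiv (Fintype.equivOfCardEq (by simp [hA]))]

theorem card_injective_image_pred_eq_mul [Fintype α] (P : Finset α → Prop) :
    Nat.card {v : ι → α // Function.Injective v ∧ P (univ.image v)} =
      Nat.card {A : Finset α // A.card = Fintype.card ι ∧ P A} * (Fintype.card ι).factorial := by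
  classical
  let π (v : {v : ι → α // Function.Injective v ∧ P (univ.image v)}) :
      {A : Finset α // A.card = Fintype.card ι ∧ P A} :=
    ⟨univ.image v.1, by rw [card_image_of_injective _ v.2.1, card_univ], v.2.2⟩
  have hfiber (A : {A : Finset α // A.card = Fintype.card ι ∧ P A}) :
      Nat.card {v // π v = A} = (Fintype.card ι).factorial := by
    rw [← card_injective_with_image_eq A.1 A.2.1]
    exact Nat.card_congr
      { toFun v := ⟨v.1.1, v.1.2.1, congrArg Subtype.val v.2⟩
        invFun v := ⟨⟨v.1, v.2.1, v.2.2.symm ▸ A.2.2⟩, Subtype.ext v.2.2⟩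
        left_inv _ := rfl
        right_inv _ := rfl }
  rw [← Nat.card_congr (Equiv.sigmaFiberEquiv π), Nat.card_sigma, Finset.sum_congr rfl
    fun A _ => hfiber A, sum_const, card_univ, smul_eq_mul, Nat.card_eq_fintype_card]

theorem card_pi_ne_zero {G₀ : Type*} [GroupWithZero G₀] :
    Nat.card {c : ι → G₀ // ∀ i, c i ≠ 0} = (Nat.card G₀ - 1) ^ Fintype.card ι := by
  rw [Nat.card_congr (Equiv.subtypePiEquivPi (p := fun _ c => c ≠ 0)), Nat.card_pi,
    ← Nat.card_congr unitsEquivNeZero, Nat.card_units, prod_const, card_univ]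

end Counting

section MinimallyDependent

variable {K V ι : Type*} [Field K] [AddCommGroup V] [Module K V]

def IsMinimallyDependent (K : Type*) [Field K] [Module K V] (v : ι → V) : Prop :=
  ¬ LinearIndependent K v ∧ ∀ i, LinearIndepOn K v {i}ᶜ

def IsMinimalNonsimplex (K : Type*) [Field K] [Module K V] (A : Finset V) : Prop :=
  ¬ LinearIndependent K (fun x : A => (x : V)) ∧
    ∀ B ⊂ A, LinearIndependent K (fun x : B => (x : V))

theorem injective_of_linearIndepOn_compl {v : ι → V} (h : ∀ i, LinearIndepOn K v {i}ᶜ)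
    (hι : 3 ≤ ENat.card ι) : Function.Injective v := by
  intro a b hab
  obtain ⟨c, hca, hcb⟩ := ENat.exists_ne_ne_of_three_le hι a b
  exact (h c).injOn hca.symm hcb.symm hab

theorem isMinimalNonsimplex_image_iff [Fintype ι] [DecidableEq V] {v : ι → V}
    (hv : Function.Injective v) :
    IsMinimalNonsimplex K (univ.image v) ↔ IsMinimallyDependent K v := by
  have hrange : ((univ.image v : Finset V) : Set V) = Set.range v := by simp
  have herase (i : ι) : (((univ.image v).erase (v i) : Finset V) : Set V) = v '' {i}ᶜ := by
    rw [coe_erase, hrange, Set.image_compl_eq_range_sdiff_image hv, Set.image_singleton]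
  refine and_congr (not_congr ?_) ⟨fun h i => ?_, fun h B hB => ?_⟩
  · exact (congrArg (LinearIndepOn K id) hrange).to_iff.trans (linearIndepOn_id_range_iff hv)
  · rw [linearIndepOn_iff_image hv.injOn, ← herase]
    exact h _ (erase_ssubset (mem_image_of_mem v (mem_univ i)))
  · obtain ⟨a, ha, hBa⟩ := ssubset_iff_exists_subset_erase.1 hB
    obtain ⟨i, -, rfl⟩ := mem_image.1 ha
    have : LinearIndepOn K id (((univ.image v).erase (v i) : Finset V) : Set V) := by
      rw [herase, ← linearIndepOn_iff_image hv.injOn]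
      exact h i
    exact this.mono hBa

theorem isMinimallyDependent_iff_injective_and_image [Fintype ι] [DecidableEq V]
    (hι : 3 ≤ ENat.card ι) {v : ι → V} :
    IsMinimallyDependent K v ↔ Function.Injective v ∧ IsMinimalNonsimplex K (univ.image v) := by
  refine ⟨fun h => ?_, fun ⟨hv, h⟩ => (isMinimalNonsimplex_image_iff hv).1 h⟩
  have hv := injective_of_linearIndepOn_compl h.2 hι
  exact ⟨hv, (isMinimalNonsimplex_image_iff hv).2 h⟩

theorem LinearIndependent.sum_smul_mem_span_image_iff [Fintype ι] {f : ι → V}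
    (hf : LinearIndependent K f) (c : ι → K) (s : Set ι) :
    ∑ i, c i • f i ∈ span K (f '' s) ↔ ∀ i ∉ s, c i = 0 := by
  constructor
  · intro h
    obtain ⟨l, hl, hlc⟩ := (Finsupp.mem_span_image_iff_linearCombination K).1 h
    have hlc' : Fintype.linearCombination K f l = Fintype.linearCombination K f c := by
      rw [Fintype.linearCombination_apply, Fintype.linearCombination_apply, ← hlc,
        Finsupp.linearCombination_apply, Finsupp.sum_fintype _ _ (by simp)]
    intro i hi
    rw [← linearIndependent_iff_injective_fintypeLinearCombination.1 hf hlc']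
    exact (Finsupp.mem_supported' K l).1 hl i hi
  · intro h
    refine sum_mem fun i _ => ?_
    by_cases hi : i ∈ s
    · exact smul_mem _ _ (subset_span (Set.mem_image_of_mem f hi))
    · rw [h i hi, zero_smul]
      exact zero_mem _

theorem linearIndepOn_compl_none_iff (v : Option ι → V) :
    LinearIndepOn K v {none}ᶜ ↔ LinearIndependent K (v ∘ some) := by
  rw [← Set.compl_range_some, compl_compl, linearIndepOn_range_iff (Option.some_injective _)]

theorem linearIndepOn_casesOn'_insert_none_iff (x : V) (f : ι → V) (s : Set ι) :
    LinearIndepOn K (fun o => Option.casesOn' o x f) (insert none (some '' s)) ↔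
      LinearIndepOn K f s ∧ x ∉ span K (f '' s) := by
  rw [linearIndepOn_insert (by simp), Set.image_image]
  exact and_congr_left' ⟨fun h => h.comp_of_image (Option.some_injective _).injOn,
    fun h => h.image_of_comp some _⟩

theorem isMinimallyDependent_casesOn'_iff_span {f : ι → V} (hf : LinearIndependent K f) (x : V) :
    IsMinimallyDependent K (fun o => Option.casesOn' o x f) ↔
      x ∈ span K (Set.range f) ∧ ∀ k, x ∉ span K (f '' {k}ᶜ) := by
  have hsome (k : ι) : ({some k}ᶜ : Set (Option ι)) = insert none (some '' {k}ᶜ) := by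
    ext (_ | _) <;> simp
  simp only [IsMinimallyDependent, linearIndependent_option', hf, true_and, not_not,
    Option.forall, linearIndepOn_compl_none_iff, hsome, linearIndepOn_casesOn'_insert_none_iff,
    hf.linearIndepOn, Function.comp_def, Option.casesOn'_some]

theorem isMinimallyDependent_casesOn'_iff [Fintype ι] {f : ι → V} (hf : LinearIndependent K f)
    (x : V) : IsMinimallyDependent K (fun o => Option.casesOn' o x f) ↔
      ∃ c : ι → K, (∀ i, c i ≠ 0) ∧ ∑ i, c i • f i = x := by
  rw [isMinimallyDependent_casesOn'_iff_span hf, mem_span_range_iff_exists_fun]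
  constructor
  · rintro ⟨⟨c, rfl⟩, h⟩
    refine ⟨c, fun k hk => h k ((hf.sum_smul_mem_span_image_iff c _).2 fun i hi => ?_), rfl⟩
    rwa [Set.notMem_compl_iff.1 hi]
  · rintro ⟨c, hc, rfl⟩
    exact ⟨⟨c, rfl⟩, fun k hk => hc k ((hf.sum_smul_mem_span_image_iff c _).1 hk k (by simp))⟩

theorem card_isMinimallyDependent_option [Fintype ι] :
    Nat.card {v : Option ι → V // IsMinimallyDependent K v} =
      Nat.card {f : ι → V // LinearIndependent K f} * Nat.card {c : ι → K // ∀ i, c i ≠ 0} := by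
  rw [← Nat.card_prod]
  refine (Nat.card_eq_of_bijective
    (fun fc => ⟨fun o => o.casesOn' (∑ i, fc.2.1 i • fc.1.1 i) fc.1.1,
      (isMinimallyDependent_casesOn'_iff fc.1.2 _).2 ⟨_, fc.2.2, rfl⟩⟩) ⟨?_, ?_⟩).symm
  · rintro ⟨⟨f, hf⟩, ⟨c, _⟩⟩ ⟨⟨f', _⟩, ⟨c', _⟩⟩ h
    have h := congrArg Subtype.val h
    obtain rfl : f = f' := funext fun i => congrFun h (some i)
    have hsum : Fintype.linearCombination K f c = Fintype.linearCombination K f c' := by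
      simpa [Fintype.linearCombination_apply] using congrFun h none
    obtain rfl := linearIndependent_iff_injective_fintypeLinearCombination.1 hf hsum
    rfl
  · rintro ⟨v, hv⟩
    have hf : LinearIndependent K (v ∘ some) := (linearIndepOn_compl_none_iff v).1 (hv.2 none)
    obtain ⟨c, hc, hsum⟩ := (isMinimallyDependent_casesOn'_iff hf (v none)).1
      (by simpa only [Option.casesOn'_none_coe] using hv)
    exact ⟨⟨⟨_, hf⟩, ⟨c, hc⟩⟩, Subtype.ext (funext fun o => by cases o <;> simp [← hsum])⟩

end MinimallyDependent

theorem stmt1_general (p n j : ℕ) (hp : p.Prime) (hj : 2 ≤ j) (hjn : j ≤ n) :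
    Nat.card {A : Finset (Fin n → ZMod p) //
        A.card = j + 1 ∧
        ¬ LinearIndependent (ZMod p) (fun x : A => (x.1 : Fin n → ZMod p)) ∧
        ∀ B ⊂ A, LinearIndependent (ZMod p) (fun x : B => (x.1 : Fin n → ZMod p))} *
      (j + 1).factorial =
    (∏ t ∈ Finset.range j, (p ^ n - p ^ t)) * (p - 1) ^ j := by
  have : Fact p.Prime := ⟨hp⟩
  have hcard := card_injective_image_pred_eq_mul (ι := Option (Fin j))
    (IsMinimalNonsimplex (ZMod p) (V := Fin n → ZMod p))
  rw [Fintype.card_option, Fintype.card_fin] at hcard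
  have h3 : 3 ≤ ENat.card (Option (Fin j)) := by
    simp only [ENat.card_eq_coe_fintype_card, Fintype.card_option, Fintype.card_fin]
    norm_cast
    omega
  change Nat.card {A : Finset (Fin n → ZMod p) //
    A.card = j + 1 ∧ IsMinimalNonsimplex (ZMod p) A} * _ = _
  rw [← hcard, ← Nat.card_congr (Equiv.subtypeEquivRight
    fun v => isMinimallyDependent_iff_injective_and_image h3), card_isMinimallyDependent_option,
    card_linearIndependent (by rwa [Module.finrank_fin_fun]), card_pi_ne_zero, Nat.card_zmod,
    ZMod.card, Module.finrank_fin_fun, Fin.prod_univ_eq_prod_range (fun t => p ^ n - p ^ t),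
    Fintype.card_fin]

/-- Count of minimal `j`-nonsimplices of the universal complex `X(F_p^n)` for `j ≥ 2`:
`N · (j+1)! = (p^n − 1)(p^n − p)⋯(p^n − p^{j−1}) · (p−1)^j`. -/
theorem stmt1 (p n j : ℕ) (hp : p.Prime) (hn : 2 ≤ n) (hj : 2 ≤ j) (hjn : j ≤ n) :
    Nat.card {A : Finset (Fin n → ZMod p) //
        A.card = j + 1 ∧
        ¬ LinearIndependent (ZMod p) (fun x : A => (x.1 : Fin n → ZMod p)) ∧
        ∀ B ⊂ A, LinearIndependent (ZMod p) (fun x : B => (x.1 : Fin n → ZMod p))} *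
      (j + 1).factorial =
    (∏ t ∈ Finset.range j, (p ^ n - p ^ t)) * (p - 1) ^ j :=
  stmt1_general p n j hp hj hjn
end

section
/- Let p be a prime, k ≤ m, and n ≥ 1. If there exists a nondegenerate simplicial map from Δ^{m+1}_(k+1) to X(F_p^n) (a function f : Fin (m+2) → (Fin n → ZMod p) such that for every finset s of Fin (m+2) with s.card ≤ k+2 the family (f i), i ∈ s, is linearly independent over ZMod p), then there exists a nondegenerate simplicial map from Δ^m_(k) to X(F_p^{n−1}) (a function g : Fin (m+1) → (Fin (n−1) → ZMod p) such that for every finset s of Fin (m+1) with s.card ≤ k+1 the family (g i), i ∈ s, is linearly independent over ZMod p). -/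
/-!
Quotienting by the image `x` of the last vertex gives the required map: a set `s` of at most
`k + 1` other vertices together with the last vertex spans a simplex of dimension at most `k + 1`,
so `f` is independent on `s ∪ {last}`; hence `x` lies outside the span of `f '' s`, and the
projection to `F_p^n ⧸ ⟨x⟩ ≅ F_p^(n-1)` keeps `f` independent on `s`.
-/

open Submodule

section QuotientSpanSingleton

variable {K V ι : Type*} [DivisionRing K] [AddCommGroup V] [Module K V]

theorem LinearIndepOn.mkQ_span_singleton_of_insert {f : ι → V} {s : Set ι} {a : ι} (ha : a ∉ s)
    (h : LinearIndepOn K f (insert a s)) : LinearIndepOn K ((K ∙ f a).mkQ ∘ f) s := by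
  rw [linearIndepOn_insert ha] at h
  refine h.1.map ?_
  rw [ker_mkQ, disjoint_span_singleton, ← Set.image_eq_range]
  exact fun hfa => absurd hfa h.2

theorem linearIndepOn_mkQ_span_singleton_comp {κ : Type*} {f : ι → V} {e : κ → ι} {a : ι}
    (he : Function.Injective e) (ha : a ∉ Set.range e) {N : ℕ}
    (hf : ∀ t : Finset ι, t.card ≤ N + 1 → LinearIndepOn K f t)
    (s : Finset κ) (hs : s.card ≤ N) : LinearIndepOn K ((K ∙ f a).mkQ ∘ f ∘ e) s := by
  classical
  have hcard : (insert a (s.image e)).card ≤ N + 1 :=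
    (Finset.card_insert_le _ _).trans (Nat.succ_le_succ (Finset.card_image_le.trans hs))
  have hindep := hf _ hcard
  rw [Finset.coe_insert, Finset.coe_image] at hindep
  exact (hindep.mkQ_span_singleton_of_insert
    fun hae => ha (Set.image_subset_range _ _ hae)).comp_of_image he.injOn

theorem nonempty_quotient_span_singleton_linearEquiv_fin_sub_one {n : ℕ} {x : Fin n → K}
    (hx : x ≠ 0) : Nonempty (((Fin n → K) ⧸ (K ∙ x)) ≃ₗ[K] (Fin (n - 1) → K)) := by
  refine ⟨LinearEquiv.ofFinrankEq _ _ ?_⟩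
  have := (K ∙ x).finrank_quotient_add_finrank
  rw [finrank_span_singleton hx, Module.finrank_fin_fun] at this
  rw [Module.finrank_fin_fun]
  omega

end QuotientSpanSingleton

theorem stmt5_general (p n m k : ℕ) (hp : p.Prime)
    (f : Fin (m + 2) → (Fin n → ZMod p))
    (hf : ∀ s : Finset (Fin (m + 2)), s.card ≤ k + 2 →
      LinearIndependent (ZMod p) (fun i : s => f i.1)) :
    ∃ g : Fin (m + 1) → (Fin (n - 1) → ZMod p),
      ∀ s : Finset (Fin (m + 1)), s.card ≤ k + 1 →
        LinearIndependent (ZMod p) (fun i : s => g i.1) := by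
  have : Fact p.Prime := ⟨hp⟩
  have hlast : f (Fin.last (m + 1)) ≠ 0 :=
    (hf {Fin.last (m + 1)} (by simp)).ne_zero ⟨_, Finset.mem_singleton_self _⟩
  obtain ⟨e⟩ := nonempty_quotient_span_singleton_linearEquiv_fin_sub_one hlast
  refine ⟨e ∘ (ZMod p ∙ f (Fin.last (m + 1))).mkQ ∘ f ∘ Fin.castSucc, fun s hs => ?_⟩
  exact (linearIndepOn_mkQ_span_singleton_comp (Fin.castSucc_injective _)
    (by simp) hf s hs).map' e.toLinearMap e.ker

/-- If there is a nondegenerate simplicial map `Δ^{m+1}_(k+1) → X(F_p^n)`,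
then there is a nondegenerate simplicial map `Δ^m_(k) → X(F_p^{n-1})`. -/
theorem stmt5 (p n m k : ℕ) (hp : p.Prime) (hkm : k ≤ m) (hn : 1 ≤ n)
    (f : Fin (m + 2) → (Fin n → ZMod p))
    (hf : ∀ s : Finset (Fin (m + 2)), s.card ≤ k + 2 →
      LinearIndependent (ZMod p) (fun i : s => f i.1)) :
    ∃ g : Fin (m + 1) → (Fin (n - 1) → ZMod p),
      ∀ s : Finset (Fin (m + 1)), s.card ≤ k + 1 →
        LinearIndependent (ZMod p) (fun i : s => g i.1) :=
  stmt5_general p n m k hp f hf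
end

section
/- Let p be a prime and k ≤ m. If there exists a nondegenerate simplicial map from Δ^m_(k) to X(F_p^n), then there exists a nondegenerate simplicial map from Δ^{m+1}_(k) to X(F_p^{n+1}); that is, if there is f : Fin (m+1) → (Fin n → ZMod p) such that for every finset s of Fin (m+1) with s.card ≤ k+1 the family (f i), i ∈ s, is linearly independent over ZMod p, then there is g : Fin (m+2) → (Fin (n+1) → ZMod p) such that for every finset s of Fin (m+2) with s.card ≤ k+1 the family (g i), i ∈ s, is linearly independent over ZMod p. -/
/-!
Cone off the map: keep the old vertices, padded with a zero last coordinate, and send the new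
vertex to the new basis vector `e_last`. A simplex not containing the new vertex stays
independent because padding by zero is injective; one containing it stays independent
because `e_last` has last coordinate `1` while the span of the other vectors lies in the
hyperplane where the last coordinate vanishes.
-/

open Set Submodule

/-- `v` is a nondegenerate simplicial map from the `k`-skeleton of the simplex on `ι` to the
universal complex of `M`. -/
def IsSkeletonNondegenerate (R : Type*) {ι M : Type*} [Ring R] [AddCommGroup M] [Module R M]
    (k : ℕ) (v : ι → M) : Prop :=
  ∀ s : Finset ι, s.card ≤ k + 1 → LinearIndepOn R v s

variable {R : Type*} [Ring R] {n m : ℕ}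

def coneMap (v : Fin m → Fin n → R) : Fin (m + 1) → Fin (n + 1) → R :=
  Fin.snoc (fun a => Fin.snoc (v a) 0) (Pi.single (Fin.last n) 1)

theorem LinearIndepOn.snoc_zero {ι : Type*} {v : ι → Fin n → R} {s : Set ι}
    (hv : LinearIndepOn R v s) :
    LinearIndepOn R (fun i => (Fin.snoc (v i) 0 : Fin (n + 1) → R)) s :=
  LinearIndepOn.of_comp (LinearMap.funLeft R R Fin.castSucc) <| by
    simpa [Function.comp_def, LinearMap.funLeft, Fin.init_snoc] using hv

theorem span_snoc_zero_le_ker_proj_last {ι : Type*} (v : ι → Fin n → R) :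
    span R (range fun i => (Fin.snoc (v i) 0 : Fin (n + 1) → R)) ≤
      LinearMap.ker (LinearMap.proj (Fin.last n)) :=
  span_le.2 <| by
    rintro _ ⟨i, rfl⟩
    simp

theorem linearIndepOn_coneMap {v : Fin m → Fin n → R} {t : Set (Fin m)}
    (hv : LinearIndepOn R v t) :
    LinearIndepOn R (coneMap v) (insert (Fin.last m) (Fin.castSucc '' t)) := by
  have hcast : coneMap v ∘ Fin.castSucc = fun a => (Fin.snoc (v a) 0 : Fin (n + 1) → R) := by
    funext a
    simp [coneMap]
  have hlast : coneMap v (Fin.last m) = Pi.single (Fin.last n) 1 := by simp [coneMap]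
  rw [insert_eq]
  refine LinearIndepOn.union ?_ ?_ ?_
  · refine LinearIndepOn.singleton' fun r hr => ?_
    simpa [hlast] using congrFun hr (Fin.last n)
  · exact LinearIndepOn.image_of_comp _ _ (hcast ▸ hv.snoc_zero)
  · rw [Submodule.disjoint_def]
    intro x hx hx'
    rw [image_singleton, hlast, mem_span_singleton] at hx
    obtain ⟨r, rfl⟩ := hx
    have hspan : span R (coneMap v '' (Fin.castSucc '' t)) ≤
        span R (range fun i => (Fin.snoc (v i) 0 : Fin (n + 1) → R)) := by
      rw [image_image, ← hcast]
      exact span_mono (image_subset_range _ _)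
    have hr : r = 0 := by simpa using span_snoc_zero_le_ker_proj_last v (hspan hx')
    rw [hr, zero_smul]

theorem IsSkeletonNondegenerate.coneMap {k : ℕ} {v : Fin m → Fin n → R}
    (hv : IsSkeletonNondegenerate R k v) : IsSkeletonNondegenerate R k (coneMap v) := by
  intro s hs
  let t := s.preimage Fin.castSucc (Fin.castSucc_injective _).injOn
  have hts : t.card ≤ s.card := Finset.card_le_card_of_injOn Fin.castSucc
    (fun a ha => Finset.mem_preimage.1 ha) (Fin.castSucc_injective _).injOn
  refine (linearIndepOn_coneMap (hv t (hts.trans hs))).mono fun j hj => ?_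
  obtain ⟨a, rfl⟩ | rfl := j.eq_castSucc_or_eq_last
  · exact Or.inr ⟨a, by simpa [t] using hj, rfl⟩
  · exact Or.inl rfl

theorem stmt6_general (p n m k : ℕ)
    (f : Fin (m + 1) → (Fin n → ZMod p))
    (hf : ∀ s : Finset (Fin (m + 1)), s.card ≤ k + 1 →
      LinearIndependent (ZMod p) (fun i : s => f i.1)) :
    ∃ g : Fin (m + 2) → (Fin (n + 1) → ZMod p),
      ∀ s : Finset (Fin (m + 2)), s.card ≤ k + 1 →
        LinearIndependent (ZMod p) (fun i : s => g i.1) :=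
  ⟨coneMap f, IsSkeletonNondegenerate.coneMap hf⟩

/-- If there is a nondegenerate simplicial map `Δ^m_(k) → X(F_p^n)`,
then there is a nondegenerate simplicial map `Δ^{m+1}_(k) → X(F_p^{n+1})`. -/
theorem stmt6 (p n m k : ℕ) (hp : p.Prime) (hkm : k ≤ m)
    (f : Fin (m + 1) → (Fin n → ZMod p))
    (hf : ∀ s : Finset (Fin (m + 1)), s.card ≤ k + 1 →
      LinearIndependent (ZMod p) (fun i : s => f i.1)) :
    ∃ g : Fin (m + 2) → (Fin (n + 1) → ZMod p),
      ∀ s : Finset (Fin (m + 2)), s.card ≤ k + 1 →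
        LinearIndependent (ZMod p) (fun i : s => g i.1) :=
  stmt6_general p n m k f hf
end

section
/- Let p be a prime and n, m, k natural numbers with k ≤ m. If (p−1)·C(m,1) + (p−1)^2·C(m,2) + ⋯ + (p−1)^k·C(m,k) < p^n − 1 (where C(m,i) denotes the binomial coefficient), then there exists a nondegenerate simplicial map from Δ^m_(k) to X(F_p^n), i.e., a function f : Fin (m+1) → (Fin n → ZMod p) such that for every finset s of Fin (m+1) with s.card ≤ k+1 the family (f i), i ∈ s, is linearly independent over ZMod p. -/
/-!
Choose the vectors `f 0, f 1, …` greedily. Once `f` is fixed on a set `T` of indices, the new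
vector `v` only has to avoid the spans of the images of the subsets of `T` of size at most `k`.
Every vector in such a span is a combination `∑ i ∈ s, c i • f i` with all `c i ≠ 0` and
`#s ≤ k`. Over a field with `q` elements there are at most `∑ i ≤ k, C(#T, i) (q - 1) ^ i`
such combinations, which for `#T ≤ m` and `q = p` is less than `p ^ n` by hypothesis, so a
good `v` always exists.
-/

open Finset Function

theorem Finset.card_filter_finsupp_card_support_le {ι K : Type*} [Zero K] [Fintype K]
    (T : Finset ι) (k : ℕ) :
    #{c ∈ T.finsupp fun _ => (univ : Finset K) | #c.support ≤ k} ≤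
      ∑ i ∈ range (k + 1), (#T).choose i * (Fintype.card K - 1) ^ i := by
  classical
  calc #{c ∈ T.finsupp fun _ => (univ : Finset K) | #c.support ≤ k}
      ≤ #((range (k + 1)).biUnion fun i => (T.powersetCard i).biUnion fun s =>
          s.finsupp fun _ => univ.erase (0 : K)) := by
        refine card_le_card fun c hc => ?_
        simp only [mem_filter, mem_finsupp_iff] at hc
        simp only [mem_biUnion, mem_range, mem_powersetCard, mem_finsupp_iff]
        exact ⟨#c.support, by omega, c.support, ⟨hc.1.1, rfl⟩, subset_rfl,
          fun i hi => by simpa using hi⟩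
    _ ≤ ∑ i ∈ range (k + 1), ∑ s ∈ T.powersetCard i, #(s.finsupp fun _ => univ.erase (0 : K)) :=
        card_biUnion_le.trans (sum_le_sum fun _ _ => card_biUnion_le)
    _ = ∑ i ∈ range (k + 1), (#T).choose i * (Fintype.card K - 1) ^ i := by
        refine sum_congr rfl fun i _ => ?_
        rw [sum_congr rfl fun s hs => by
          rw [card_finsupp, prod_const, card_erase_of_mem (mem_univ _), card_univ,
            (mem_powersetCard.1 hs).2]]
        rw [sum_const, card_powersetCard, smul_eq_mul]

section GreedyConstruction

variable {ι K V : Type*} [Field K] [AddCommGroup V] [Module K V]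

theorem linearIndepOn_update_of_notMem_span [DecidableEq ι] {f : ι → V} {T : Finset ι}
    {a : ι} {v : V} {k : ℕ} (ha : a ∉ T) (hf : ∀ s ⊆ T, #s ≤ k + 1 → LinearIndepOn K f s)
    (hv : ∀ s ⊆ T, #s ≤ k → v ∉ Submodule.span K (f '' s)) :
    ∀ s ⊆ insert a T, #s ≤ k + 1 → LinearIndepOn K (update f a v) s := by
  intro s hsT hs
  have hsub : s.erase a ⊆ T := subset_insert_iff.1 hsT
  have hfs : Set.EqOn f (update f a v) (s.erase a : Set ι) := fun i hi =>
    (update_of_ne (ne_of_mem_of_not_mem (hsub hi) ha) _ _).symm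
  by_cases has : a ∈ s
  · have hcard : #(s.erase a) ≤ k := by
      have := card_erase_of_mem has
      omega
    rw [← insert_erase has, coe_insert, linearIndepOn_insert (by simp), ← hfs.image_eq,
      update_self]
    exact ⟨(hf _ hsub (by omega)).congr hfs, hv _ hsub hcard⟩
  · rw [erase_eq_of_notMem has] at hsub hfs
    exact (hf s hsub hs).congr hfs

variable [Fintype K] [Fintype V]

theorem exists_notMem_span_image_of_card_lt (f : ι → V) (T : Finset ι) (k : ℕ)
    (hT : ∑ i ∈ range (k + 1), (#T).choose i * (Fintype.card K - 1) ^ i < Fintype.card V) :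
    ∃ v : V, ∀ s ⊆ T, #s ≤ k → v ∉ Submodule.span K (f '' s) := by
  classical
  set C := {c ∈ T.finsupp fun _ => (univ : Finset K) | #c.support ≤ k}
  have hC : #(C.image (Finsupp.linearCombination K f)) < #(univ : Finset V) :=
    card_image_le.trans_lt ((T.card_filter_finsupp_card_support_le k).trans_lt hT)
  obtain ⟨v, -, hv⟩ := exists_mem_notMem_of_card_lt_card hC
  refine ⟨v, fun s hsT hs hmem => hv ?_⟩
  obtain ⟨c, hc, rfl⟩ := (Finsupp.mem_span_image_iff_linearCombination K).1 hmem
  have hcs : c.support ⊆ s := by simpa [Finsupp.mem_supported] using hc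
  exact mem_image_of_mem _ <| mem_filter.2
    ⟨mem_finsupp_iff.2 ⟨hcs.trans hsT, fun _ _ => mem_univ _⟩, (card_le_card hcs).trans hs⟩

theorem exists_forall_linearIndepOn_of_card_lt [DecidableEq ι] (T : Finset ι) (k : ℕ)
    (hT : ∑ i ∈ range (k + 1), (#T - 1).choose i * (Fintype.card K - 1) ^ i <
      Fintype.card V) :
    ∃ f : ι → V, ∀ s ⊆ T, #s ≤ k + 1 → LinearIndepOn K f s := by
  induction T using Finset.induction_on with
  | empty =>
    exact ⟨0, fun s hs _ => by rw [subset_empty.1 hs, coe_empty]; exact linearIndepOn_empty _ _⟩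
  | insert a T ha ih =>
    rw [card_insert_of_notMem ha, Nat.add_sub_cancel] at hT
    obtain ⟨f, hf⟩ := ih <| (sum_le_sum fun i _ =>
      Nat.mul_le_mul_right _ (Nat.choose_le_choose i (Nat.sub_le _ 1))).trans_lt hT
    obtain ⟨v, hv⟩ := exists_notMem_span_image_of_card_lt (K := K) f T k hT
    exact ⟨update f a v, linearIndepOn_update_of_notMem_span ha hf hv⟩

end GreedyConstruction

theorem stmt7_general (p n m k : ℕ) (hp : p.Prime)
    (h : ∑ i ∈ Finset.Icc 1 k, (p - 1) ^ i * m.choose i < p ^ n - 1) :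
    ∃ f : Fin (m + 1) → (Fin n → ZMod p),
      ∀ s : Finset (Fin (m + 1)), s.card ≤ k + 1 →
        LinearIndependent (ZMod p) (fun i : s => f i.1) := by
  have : Fact p.Prime := ⟨hp⟩
  have hcard : ∑ i ∈ range (k + 1), (#(univ : Finset (Fin (m + 1))) - 1).choose i *
      (Fintype.card (ZMod p) - 1) ^ i < Fintype.card (Fin n → ZMod p) := by
    have h0 : 0 < p ^ n := pow_pos hp.pos n
    rw [card_univ, Fintype.card_fin, Nat.add_sub_cancel, ZMod.card, Fintype.card_fun,
      ZMod.card, Fintype.card_fin, range_eq_Ico, sum_eq_sum_Ico_succ_bot (Nat.succ_pos k)]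
    simp only [Nat.choose_zero_right, pow_zero, mul_one, mul_comm (m.choose _)]
    change 1 + ∑ i ∈ Icc 1 k, (p - 1) ^ i * m.choose i < p ^ n
    omega
  obtain ⟨f, hf⟩ := exists_forall_linearIndepOn_of_card_lt univ k hcard
  exact ⟨f, fun s hs => hf s (subset_univ s) hs⟩

/-- If `(p−1)·C(m,1) + (p−1)²·C(m,2) + ⋯ + (p−1)^k·C(m,k) < p^n − 1`, then there
exists a nondegenerate simplicial map `Δ^m_(k) → X(F_p^n)`. -/
theorem stmt7 (p n m k : ℕ) (hp : p.Prime) (hkm : k ≤ m)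
    (h : ∑ i ∈ Finset.Icc 1 k, (p - 1) ^ i * m.choose i < p ^ n - 1) :
    ∃ f : Fin (m + 1) → (Fin n → ZMod p),
      ∀ s : Finset (Fin (m + 1)), s.card ≤ k + 1 →
        LinearIndependent (ZMod p) (fun i : s => f i.1) :=
  stmt7_general p n m k hp h
end

section
/- Let p be a prime and 0 ≤ k ≤ m−1. Then: (i) there exists a nondegenerate simplicial map from Δ^m_(k) to X(F_p^m), i.e., a function f : Fin (m+1) → (Fin m → ZMod p) such that for every finset s of Fin (m+1) with s.card ≤ k+1 the family (f i), i ∈ s, is linearly independent over ZMod p; and (ii) there is no nondegenerate simplicial map from Δ^m_(k) to X(F_p^k), i.e., no function g : Fin (m+1) → (Fin k → ZMod p) such that for every finset s of Fin (m+1) with s.card ≤ k+1 the family (g i), i ∈ s, is linearly independent over ZMod p. (Equivalently, 1 ≤ s_p(Δ^m_(k)) ≤ m − k.) -/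
/-!
For (i), map the vertices to the standard basis `e₀, …, e_{m-1}` of `F_p^m` together with
`e₀ + ⋯ + e_{m-1}`: any `m` of these `m + 1` vectors are linearly independent, and a simplex of
`Δ^m_(k)` has at most `k + 1 ≤ m` vertices. For (ii), `k + 1` vectors in `F_p^k` are dependent.
-/

open Finset Module

section StdBasisWithOnes

variable (R : Type*) [Ring R] (m : ℕ)

def stdBasisWithOnes : Fin (m + 1) → Fin m → R :=
  Fin.lastCases (fun _ => 1) (fun j => Pi.single j 1)

variable {R m}

theorem linearCombination_stdBasisWithOnes_apply (l : Fin (m + 1) →₀ R) (j : Fin m) :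
    Finsupp.linearCombination R (stdBasisWithOnes R m) l j = l j.castSucc + l (Fin.last m) := by
  rw [Finsupp.linearCombination_apply, Finsupp.sum_fintype _ _ (by simp), Finset.sum_apply,
    Fin.sum_univ_castSucc]
  simp [stdBasisWithOnes, Pi.single_apply]

theorem linearIndepOn_stdBasisWithOnes_compl_singleton (a : Fin (m + 1)) :
    LinearIndepOn R (stdBasisWithOnes R m) {a}ᶜ := by
  rw [linearIndepOn_iff]
  intro l hl hzero
  have hcoord (j : Fin m) : l j.castSucc + l (Fin.last m) = 0 := by
    rw [← linearCombination_stdBasisWithOnes_apply, hzero, Pi.zero_apply]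
  have ha : l a = 0 := Finsupp.notMem_support_iff.mp fun h => hl h rfl
  have hlast : l (Fin.last m) = 0 := by
    induction a using Fin.lastCases with
    | last => exact ha
    | cast j => simpa [ha] using hcoord j
  ext i
  induction i using Fin.lastCases with
  | last => exact hlast
  | cast j => simpa [hlast] using hcoord j

end StdBasisWithOnes

theorem exists_card_eq_not_linearIndependent_of_finrank_lt {R M ι : Type*} [Ring R]
    [StrongRankCondition R] [AddCommGroup M] [Module R M] [Module.Finite R M] [Fintype ι]
    (g : ι → M) (h : finrank R M < Fintype.card ι) :
    ∃ s : Finset ι, #s = finrank R M + 1 ∧ ¬ LinearIndependent R (fun i : s => g i) := by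
  obtain ⟨s, -, hs⟩ := exists_subset_card_eq (s := (univ : Finset ι)) (n := finrank R M + 1) h
  refine ⟨s, hs, fun hli => ?_⟩
  have := hli.fintype_card_le_finrank
  rw [Fintype.card_coe, hs] at this
  omega

/-- For `0 ≤ k ≤ m−1`: there is a nondegenerate simplicial map
`Δ^m_(k) → X(F_p^m)`, and there is no nondegenerate simplicial map
`Δ^m_(k) → X(F_p^k)`.  (Equivalently `1 ≤ s_p(Δ^m_(k)) ≤ m − k`.) -/
theorem stmt8 (p m k : ℕ) (hp : p.Prime) (hkm : k + 1 ≤ m) :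
    (∃ f : Fin (m + 1) → (Fin m → ZMod p),
      ∀ s : Finset (Fin (m + 1)), s.card ≤ k + 1 →
        LinearIndependent (ZMod p) (fun i : s => f i.1)) ∧
    ¬ (∃ g : Fin (m + 1) → (Fin k → ZMod p),
      ∀ s : Finset (Fin (m + 1)), s.card ≤ k + 1 →
        LinearIndependent (ZMod p) (fun i : s => g i.1)) := by
  have := Fact.mk hp
  refine ⟨⟨stdBasisWithOnes (ZMod p) m, fun s hs => ?_⟩, fun ⟨g, hg⟩ => ?_⟩
  · obtain ⟨a, ha⟩ : ∃ a, a ∉ s := by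
      by_contra! hall
      simp [eq_univ_of_forall hall] at hs
      omega
    exact (linearIndepOn_stdBasisWithOnes_compl_singleton a).mono
      (Set.subset_compl_singleton_iff.mpr ha)
  · obtain ⟨s, hs, hdep⟩ := exists_card_eq_not_linearIndependent_of_finrank_lt (R := ZMod p) g
      (by simp only [finrank_fin_fun, Fintype.card_fin]; omega)
    exact hdep (hg s (by simp [hs]))
end

section
/- Let p be a prime and 0 ≤ k ≤ m−1 with m ≤ p. Then there exists a nondegenerate simplicial map from Δ^m_(k) to X(F_p^{k+1}), i.e., a function f : Fin (m+1) → (Fin (k+1) → ZMod p) such that for every finset s of Fin (m+1) with s.card ≤ k+1 the family (f i), i ∈ s, is linearly independent over ZMod p. (Consequently s_p(Δ^m_(k)) = m − k.) -/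
/-!
Take for `f` the rows of the rectangular projective Vandermonde matrix at the `m + 1 ≤ p + 1`
points `[i : 1]` (and possibly `[1 : 0]`) of the projective line over `𝔽_p`. Any `k + 1` of these
rows form a projective Vandermonde matrix, whose determinant `∏ (v j w i - v i w j)` is nonzero
because the points are pairwise distinct; a smaller set of rows is first enlarged to `k + 1` rows.
-/

open Matrix Finset

section RectVandermonde

variable {K α : Type*} [Field K] {v w : α → K} {n : ℕ}

theorem Matrix.linearIndependent_rectVandermonde_rows_of_card_eq {s : Finset α} (hs : #s = n)
    (hvw : (s : Set α).Pairwise fun i j ↦ v j * w i - v i * w j ≠ 0) :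
    LinearIndependent K fun i : s ↦ rectVandermonde v w n i := by
  subst hs
  let e := s.equivFin.symm
  have hdet : (projVandermonde (v ∘ (↑) ∘ e) (w ∘ (↑) ∘ e)).det ≠ 0 := by
    rw [det_projVandermonde]
    refine prod_ne_zero_iff.2 fun i _ ↦ prod_ne_zero_iff.2 fun j hj ↦ ?_
    exact hvw (e i).2 (e j).2 (Subtype.val_injective.ne (e.injective.ne (mem_Ioi.1 hj).ne))
  exact (linearIndependent_equiv e).1 (linearIndependent_rows_of_det_ne_zero hdet)

theorem Matrix.linearIndependent_rectVandermonde_rows [Fintype α] (hn : n ≤ Fintype.card α)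
    (hvw : Pairwise fun i j ↦ v j * w i - v i * w j ≠ 0) {s : Finset α} (hs : #s ≤ n) :
    LinearIndependent K fun i : s ↦ rectVandermonde v w n i := by
  obtain ⟨t, hst, ht⟩ := Finset.exists_superset_card_eq hs hn
  exact (linearIndependent_rectVandermonde_rows_of_card_eq ht fun i _ j _ hij ↦ hvw hij).comp
    (Set.inclusion hst) (Set.inclusion_injective hst)

end RectVandermonde

/- `[projLineNum p i : projLineDen p i]` is `[i : 1]` for `i < p` and `[1 : 0]` for `i = p`:
the `p + 1` points of the projective line over `ZMod p`. -/
def projLineNum (p i : ℕ) : ZMod p := if i = p then 1 else i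

def projLineDen (p i : ℕ) : ZMod p := if i = p then 0 else 1

theorem projLine_cross_sub_ne_zero {p i j : ℕ} [Fact (1 < p)] (hi : i ≤ p) (hj : j ≤ p)
    (hij : i ≠ j) : projLineNum p j * projLineDen p i - projLineNum p i * projLineDen p j ≠ 0 := by
  unfold projLineNum projLineDen
  by_cases hip : i = p <;> by_cases hjp : j = p
  · exact absurd (hip.trans hjp.symm) hij
  · simp [hip, hjp]
  · simp [hip, hjp]
  · simp only [hip, hjp, if_false, mul_one, sub_ne_zero, Ne, ZMod.natCast_eq_natCast_iff',
      Nat.mod_eq_of_lt (lt_of_le_of_ne hi hip), Nat.mod_eq_of_lt (lt_of_le_of_ne hj hjp)]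
    exact hij.symm

/-- For `0 ≤ k ≤ m−1` and `m ≤ p`: there is a nondegenerate simplicial map
`Δ^m_(k) → X(F_p^{k+1})`.  (Consequently `s_p(Δ^m_(k)) = m − k`.) -/
theorem stmt9 (p m k : ℕ) (hp : p.Prime) (hkm : k + 1 ≤ m) (hmp : m ≤ p) :
    ∃ f : Fin (m + 1) → (Fin (k + 1) → ZMod p),
      ∀ s : Finset (Fin (m + 1)), s.card ≤ k + 1 →
        LinearIndependent (ZMod p) (fun i : s => f i.1) := by
  have := Fact.mk hp
  have := Fact.mk hp.one_lt
  refine ⟨rectVandermonde (fun i : Fin (m + 1) ↦ projLineNum p i) (fun i ↦ projLineDen p i) (k + 1),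
    fun s hs ↦ linearIndependent_rectVandermonde_rows (by rw [Fintype.card_fin]; omega) ?_ hs⟩
  intro i j hij
  exact projLine_cross_sub_ne_zero (by omega) (by omega) (Fin.val_injective.ne hij)
end

section
/- Let p be a prime, m ≥ 2, and 0 ≤ k ≤ m−1 with k % p ≠ p−1. Then there exists a nondegenerate simplicial map from Δ^m_(k) to X(F_p^{m−1}) (a function f : Fin (m+1) → (Fin (m−1) → ZMod p) such that for every finset s of Fin (m+1) with s.card ≤ k+1 the family (f i), i ∈ s, is linearly independent over ZMod p) if and only if m ≥ k + k/p + 2, where k/p denotes the floor of k divided by p. (Equivalently, s_p(Δ^m_(k)) ≥ 2 if and only if m ≥ k + ⌊k/p⌋ + 2.) -/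
/-!
A family `f : ι → V` whose subfamilies of size at most `d` are linearly independent is a
parity-check matrix of the code `ker (c ↦ ∑ cᵢ • fᵢ) ⊆ K^ι` of minimum distance greater than `d`.
If `#ι = dim V + 2` this code has dimension at least `2`, and conversely every `2`-dimensional
code is such a kernel. Over `F_q`, a code of length `n`, dimension at least `2` and minimum
distance `w` contains nonzero codewords `u + t • v` (`t ∈ F_q`) and `v`, one on each line of a
plane; each coordinate vanishes on all of them or on exactly one, so their total weight is at most
`q n`, whence the Griesmer bound `(q + 1) w ≤ q n`. It is attained by the code whose generator
matrix has as columns the `q + 1` points of the projective line, repeated cyclically. When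
`k % p ≠ p - 1`, the bound `(p + 1)(k + 2) ≤ p (m + 1)` reads `k + ⌊k / p⌋ + 2 ≤ m`.
-/

open Finset Module

section ParityCheck

variable {R ι V : Type*} [Ring R] [DecidableEq R] [Fintype ι] [AddCommGroup V] [Module R V]

theorem forall_card_le_linearIndependent_iff (f : ι → V) (d : ℕ) :
    (∀ s : Finset ι, #s ≤ d → LinearIndependent R (fun i : s => f i)) ↔
      ∀ c ∈ LinearMap.ker (Fintype.linearCombination R f), c ≠ 0 → d < hammingNorm c := by
  classical
  refine ⟨fun h c hc hc0 => ?_, fun h s hs => ?_⟩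
  · by_contra! hle
    have hsum : ∑ i with c i ≠ 0, c i • f i = 0 := by
      rw [sum_filter_of_ne fun i _ hi => left_ne_zero_of_smul hi]
      simpa [Fintype.linearCombination_apply] using hc
    obtain ⟨i, hi⟩ := Function.ne_iff.mp hc0
    exact hi (linearIndepOn_finset_iff.mp (h _ hle) c hsum i (by simpa using hi))
  · refine linearIndepOn_finset_iff.mpr fun g hg i hi => ?_
    set c : ι → R := s.piecewise g 0
    have hc : c ∈ LinearMap.ker (Fintype.linearCombination R f) := by
      simpa [Fintype.linearCombination_apply, c, Finset.piecewise, ite_smul, sum_ite_mem] using hg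
    have hcs : hammingNorm c ≤ #s := by
      refine card_le_card fun j hj => ?_
      by_contra hjs
      simp [c, hjs] at hj
    by_contra hgi
    exact (h c hc (Function.ne_iff.mpr ⟨i, by simpa [c, hi] using hgi⟩)).not_ge (hcs.trans hs)

end ParityCheck

section KernelDimension

variable {K ι V : Type*} [Field K] [Fintype ι] [AddCommGroup V] [Module K V]
  [FiniteDimensional K V]

theorem card_le_finrank_add_finrank_ker_linearCombination (f : ι → V) :
    Fintype.card ι ≤ finrank K V + finrank K (LinearMap.ker (Fintype.linearCombination K f)) := by
  have := LinearMap.finrank_range_add_finrank_ker (Fintype.linearCombination K f)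
  have := Submodule.finrank_le (LinearMap.range (Fintype.linearCombination K f))
  rw [finrank_fintype_fun_eq_card] at *
  omega

theorem exists_ker_linearCombination_eq (C : Submodule K (ι → K))
    (hC : finrank K V + finrank K C = Fintype.card ι) :
    ∃ f : ι → V, LinearMap.ker (Fintype.linearCombination K f) = C := by
  classical
  have hdim : finrank K ((ι → K) ⧸ C) = finrank K V := by
    have := C.finrank_quotient_add_finrank
    rw [finrank_fintype_fun_eq_card] at this
    omega
  let L := (LinearEquiv.ofFinrankEq _ _ hdim).toLinearMap ∘ₗ C.mkQ
  refine ⟨fun i => L (Pi.single i 1), ?_⟩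
  have hL : Fintype.linearCombination K (fun i => L (Pi.single i 1)) = L := by
    ext i
    simp
  rw [hL, LinearMap.ker_comp, LinearEquiv.ker, Submodule.comap_bot, Submodule.ker_mkQ]

end KernelDimension

theorem Submodule.exists_add_smul_ne_zero {K M : Type*} [Field K] [AddCommGroup M] [Module K M]
    (C : Submodule K M) (hC : 2 ≤ finrank K C) :
    ∃ u ∈ C, ∃ v ∈ C, v ≠ 0 ∧ ∀ t : K, u + t • v ≠ 0 := by
  have : Module.Finite K C := Module.finite_of_finrank_pos (by omega)
  obtain ⟨v, hv⟩ := (finrank_pos_iff_exists_ne_zero (R := K) (M := C)).mp (by omega)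
  obtain ⟨u, huv⟩ := exists_linearIndependent_pair_of_one_lt_finrank (R := K) (by omega) hv
  refine ⟨u, u.2, v, v.2, by simpa using hv, fun t h => ?_⟩
  have := LinearIndependent.pair_iff.mp huv t 1 (by
    rw [add_comm]
    exact Subtype.ext (by simpa using h))
  exact one_ne_zero this.2

section Griesmer

variable {K ι : Type*} [Field K] [Fintype K] [DecidableEq K] [Fintype ι]

theorem card_add_mul_ne_zero_add_le (a b : K) :
    #{t | a + t * b ≠ 0} + (if b = 0 then 0 else 1) ≤ Fintype.card K := by
  by_cases hb : b = 0
  · simpa [hb] using card_le_univ _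
  · have hzero : ({t | a + t * b ≠ 0} : Finset K) = univ.erase (-a / b) := by
      ext t
      simp [eq_div_iff hb, eq_neg_iff_add_eq_zero, add_comm]
    rw [hzero, card_erase_of_mem (mem_univ _), card_univ, if_neg hb]
    have := Fintype.card_pos (α := K)
    omega

theorem sum_hammingNorm_add_smul_add_hammingNorm_le (u v : ι → K) :
    ∑ t : K, hammingNorm (u + t • v) + hammingNorm v ≤ Fintype.card K * Fintype.card ι := by
  calc ∑ t : K, hammingNorm (u + t • v) + hammingNorm v
      = ∑ i, (#{t | u i + t * v i ≠ 0} + if v i = 0 then 0 else 1) := by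
        simp only [hammingNorm, card_filter, sum_add_distrib, Pi.add_apply, Pi.smul_apply,
          smul_eq_mul, ite_not]
        rw [sum_comm]
    _ ≤ ∑ _i : ι, Fintype.card K := sum_le_sum fun i _ => card_add_mul_ne_zero_add_le _ _
    _ = Fintype.card K * Fintype.card ι := by simp [mul_comm]

theorem griesmer_of_two_le_finrank (C : Submodule K (ι → K)) (hC : 2 ≤ finrank K C) {w : ℕ}
    (hw : ∀ x ∈ C, x ≠ 0 → w ≤ hammingNorm x) :
    (Fintype.card K + 1) * w ≤ Fintype.card K * Fintype.card ι := by
  obtain ⟨u, hu, v, hv, hv0, huv⟩ := C.exists_add_smul_ne_zero hC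
  calc (Fintype.card K + 1) * w = #(univ : Finset K) • w + w := by simp [add_mul]
    _ ≤ ∑ t : K, hammingNorm (u + t • v) + hammingNorm v := by
      gcongr
      · exact card_nsmul_le_sum _ _ _ fun t _ => hw _ (C.add_mem hu (C.smul_mem t hv)) (huv t)
      · exact hw v hv hv0
    _ ≤ Fintype.card K * Fintype.card ι := sum_hammingNorm_add_smul_add_hammingNorm_le u v

end Griesmer

theorem exists_card_fiber_le (ι α : Type*) [Fintype ι] [Fintype α] [Nonempty α] [DecidableEq α] :
    ∃ c : ι → α, ∀ a z, Fintype.card ι ≤ Fintype.card α * z → #{i | c i = a} ≤ z := by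
  set N := Fintype.card α
  have hN : 0 < N := Fintype.card_pos
  let e := Fintype.equivFin ι
  let g := (Fintype.equivFin α).symm
  refine ⟨fun i => g ⟨e i % N, Nat.mod_lt _ hN⟩, fun a z hz => ?_⟩
  calc #{i | g ⟨e i % N, Nat.mod_lt _ hN⟩ = a} ≤ #(range z) := by
        refine card_le_card_of_injOn (fun i => (e i : ℕ) / N) (fun i _ => ?_) ?_
        · simpa using Nat.div_lt_of_lt_mul ((e i).2.trans_le hz)
        · intro i hi j hj hij
          simp only [coe_filter, Set.mem_ofPred_eq, mem_univ, true_and] at hi hj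
          have hmod : (e i : ℕ) % N = e j % N := by
            simpa [Fin.ext_iff] using g.injective (hi.trans hj.symm)
          apply e.injective
          rw [Fin.ext_iff, ← Nat.div_add_mod (e i : ℕ) N, ← Nat.div_add_mod (e j : ℕ) N, hmod]
          rw [show (e i : ℕ) / N = e j / N from hij]
    _ = z := card_range z

section ProjectiveLineCode

variable {K ι : Type*} [Field K] [DecidableEq K] [Fintype ι]

theorem exists_forall_eq_of_elim_eq_zero (a b : K) (hab : (a, b) ≠ 0) :
    ∃ o : Option K, ∀ o' : Option K, o'.elim b (fun t => a + b * t) = 0 → o' = o := by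
  by_cases hb : b = 0
  · subst hb
    refine ⟨none, fun o' h => ?_⟩
    cases o' with
    | none => rfl
    | some t => exact absurd (by simpa using h) hab
  · refine ⟨some (-a / b), fun o' h => ?_⟩
    cases o' with
    | none => exact absurd h hb
    | some t =>
      simp only [Option.elim_some, Option.some.injEq] at h ⊢
      field_simp
      linear_combination h

/-- `Option K` is the projective line over `K`, with `some t = [1 : t]` and `none = [0 : 1]`; this
is the code whose generator matrix has the point `c i` as its `i`-th column. -/
def projLineCode (c : ι → Option K) : K × K →ₗ[K] (ι → K) where
  toFun x i := (c i).elim x.2 (fun t => x.1 + x.2 * t)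
  map_add' x y := by
    ext i
    simp only [Pi.add_apply]
    cases c i <;> simp only [Option.elim_none, Option.elim_some, Prod.fst_add, Prod.snd_add]
    all_goals ring
  map_smul' r x := by
    ext i
    simp only [Pi.smul_apply]
    cases c i <;> simp only [Option.elim_none, Option.elim_some, Prod.smul_fst, Prod.smul_snd,
      smul_eq_mul, RingHom.id_apply]
    all_goals ring

theorem card_le_hammingNorm_projLineCode_add {c : ι → Option K} {z : ℕ}
    (hc : ∀ o, #{i | c i = o} ≤ z) {x : K × K} (hx : x ≠ 0) :
    Fintype.card ι ≤ hammingNorm (projLineCode c x) + z := by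
  obtain ⟨o, ho⟩ := exists_forall_eq_of_elim_eq_zero x.1 x.2 hx
  have hzeros : #{i | projLineCode c x i = 0} ≤ z :=
    (card_le_card fun i hi => by
      simp only [mem_filter, mem_univ, true_and] at hi ⊢
      exact ho (c i) hi).trans (hc o)
  have := card_filter_add_card_filter_not (s := univ) (fun i => projLineCode c x i = 0)
  rw [card_univ] at this
  simp only [hammingNorm, ne_eq]
  omega

theorem exists_finrank_eq_two_forall_le_hammingNorm [Fintype K] {w : ℕ} (hw : 0 < w)
    (h : (Fintype.card K + 1) * w ≤ Fintype.card K * Fintype.card ι) :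
    ∃ C : Submodule K (ι → K), finrank K C = 2 ∧ ∀ x ∈ C, x ≠ 0 → w ≤ hammingNorm x := by
  obtain ⟨c, hc⟩ := exists_card_fiber_le ι (Option K)
  have hfiber : ∀ o, #{i | c i = o} ≤ Fintype.card ι - w := fun o => hc o _ <| by
    rw [Fintype.card_option, Nat.mul_sub]
    exact Nat.le_sub_of_add_le (by linarith)
  have hwn : w ≤ Fintype.card ι := by nlinarith
  have hweight : ∀ x ≠ 0, w ≤ hammingNorm (projLineCode c x) := fun x hx => by
    have := card_le_hammingNorm_projLineCode_add hfiber hx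
    omega
  have hinj : Function.Injective (projLineCode c) := by
    refine (injective_iff_map_eq_zero _).mpr fun x hx => ?_
    by_contra hx0
    have := hweight x hx0
    rw [hx, hammingNorm_zero] at this
    omega
  refine ⟨LinearMap.range (projLineCode c), ?_, ?_⟩
  · rw [LinearMap.finrank_range_of_inj hinj, finrank_prod, finrank_self]
  · rintro _ ⟨x, rfl⟩ hx
    exact hweight x (by rintro rfl; exact hx (map_zero _))

end ProjectiveLineCode

theorem exists_forall_card_le_linearIndependent_iff {K V ι : Type*} [Field K] [Fintype K]
    [AddCommGroup V] [Module K V] [FiniteDimensional K V] [Fintype ι]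
    (hι : Fintype.card ι = finrank K V + 2) (d : ℕ) :
    (∃ f : ι → V, ∀ s : Finset ι, #s ≤ d → LinearIndependent K (fun i : s => f i)) ↔
      (Fintype.card K + 1) * (d + 1) ≤ Fintype.card K * Fintype.card ι := by
  classical
  constructor
  · rintro ⟨f, hf⟩
    have := card_le_finrank_add_finrank_ker_linearCombination (K := K) f
    exact griesmer_of_two_le_finrank _ (by omega)
      ((forall_card_le_linearIndependent_iff f d).mp hf)
  · intro h
    obtain ⟨C, hC, hCw⟩ := exists_finrank_eq_two_forall_le_hammingNorm d.succ_pos h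
    obtain ⟨f, hf⟩ := exists_ker_linearCombination_eq (V := V) C (by omega)
    exact ⟨f, (forall_card_le_linearIndependent_iff f d).mpr (hf ▸ hCw)⟩

theorem Nat.add_div_add_two_le_iff {p k m : ℕ} (hp : 0 < p) (hk : k % p ≠ p - 1) :
    k + k / p + 2 ≤ m ↔ (p + 1) * (k + 2) ≤ p * (m + 1) := by
  have hdiv := Nat.div_add_mod k p
  have hr : k % p + 2 ≤ p := by have := Nat.mod_lt k hp; omega
  generalize k / p = q at *
  generalize k % p = r at *
  subst hdiv
  constructor
  · intro h
    nlinarith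
  · intro h
    by_contra! hlt
    nlinarith [Nat.mul_le_mul_left p (show m + 1 ≤ p * q + r + q + 2 by omega)]

theorem stmt10_general (p m k : ℕ) (hp : p.Prime) (hm : 2 ≤ m) (hk : k % p ≠ p - 1) :
    (∃ f : Fin (m + 1) → (Fin (m - 1) → ZMod p),
      ∀ s : Finset (Fin (m + 1)), s.card ≤ k + 1 →
        LinearIndependent (ZMod p) (fun i : s => f i.1)) ↔
    k + k / p + 2 ≤ m := by
  have := Fact.mk hp
  have key := exists_forall_card_le_linearIndependent_iff (K := ZMod p)
    (V := Fin (m - 1) → ZMod p) (ι := Fin (m + 1)) (by simp; omega) (k + 1)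
  rw [ZMod.card, Fintype.card_fin] at key
  rw [key, Nat.add_div_add_two_le_iff hp.pos hk]

/-- For `m ≥ 2`, `0 ≤ k ≤ m−1`, and `k % p ≠ p−1`: there is a nondegenerate
simplicial map `Δ^m_(k) → X(F_p^{m−1})` iff `m ≥ k + ⌊k/p⌋ + 2`.
(Equivalently, `s_p(Δ^m_(k)) ≥ 2` iff `m ≥ k + ⌊k/p⌋ + 2`.) -/
theorem stmt10 (p m k : ℕ) (hp : p.Prime) (hm : 2 ≤ m) (hkm : k + 1 ≤ m)
    (hk : k % p ≠ p - 1) :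
    (∃ f : Fin (m + 1) → (Fin (m - 1) → ZMod p),
      ∀ s : Finset (Fin (m + 1)), s.card ≤ k + 1 →
        LinearIndependent (ZMod p) (fun i : s => f i.1)) ↔
    k + k / p + 2 ≤ m :=
  stmt10_general p m k hp hm hk
end

section
/- Let p be a prime, m ≥ 2, and 0 ≤ k ≤ m−1 with k % p = p−1. Then there exists a nondegenerate simplicial map from Δ^m_(k) to X(F_p^{m−1}) (a function f : Fin (m+1) → (Fin (m−1) → ZMod p) such that for every finset s of Fin (m+1) with s.card ≤ k+1 the family (f i), i ∈ s, is linearly independent over ZMod p) if and only if m ≥ k + k/p + 3, where k/p denotes the floor of k divided by p. (Equivalently, s_p(Δ^m_(k)) ≥ 2 if and only if m ≥ k + ⌊k/p⌋ + 3.) -/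
/-!
The condition on `f` says exactly that every nonzero vector of the code
`C = ker (w ↦ ∑ i, w i • f i) ⊆ 𝔽_p^(m+1)` has Hamming weight at least `k + 2`, and `C` has
dimension at least `2` because `f` lands in `𝔽_p^(m-1)`. Counting the nonzero entries of all
codewords (the Plotkin argument) gives `(p + 1)(k + 2) ≤ p(m + 1)`, which, since
`k + 1 = p(⌊k/p⌋ + 1)`, is `m ≥ k + ⌊k/p⌋ + 3`. Conversely, listing the `p + 1` points of the
projective line over `𝔽_p` cyclically gives a `2`-dimensional code whose nonzero words vanish
on a single residue class mod `p + 1`; its parity-check matrix is the required map.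
-/

open Finset

/-- `f` is a nondegenerate simplicial map from the `k`-skeleton of the simplex on `ι`. -/
def SkeletonNondegenerate (R : Type*) {ι M : Type*} [Semiring R] [AddCommMonoid M] [Module R M]
    (k : ℕ) (f : ι → M) : Prop :=
  ∀ s : Finset ι, s.card ≤ k + 1 → LinearIndependent R (fun i : s => f i.1)

theorem skeletonNondegenerate_iff_hammingNorm {R ι M : Type*} [Ring R] [AddCommGroup M]
    [Module R M] [Fintype ι] [DecidableEq R] {k : ℕ} {f : ι → M} :
    SkeletonNondegenerate R k f ↔
      ∀ w ∈ LinearMap.ker (Fintype.linearCombination R f), w ≠ 0 →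
        k + 2 ≤ hammingNorm w := by
  classical
  constructor
  · intro hf w hw hw0
    set s : Finset ι := {i | w i ≠ 0}
    by_contra! hwt
    have hsum : ∑ i : s, w i • f i = 0 := by
      rw [Finset.sum_coe_sort s (fun i => w i • f i), ← hw, Fintype.linearCombination_apply]
      exact Finset.sum_subset (subset_univ s) fun i _ hi => by simp_all [s]
    refine hw0 (funext fun i => not_not.1 fun hi => ?_)
    exact hi (Fintype.linearIndependent_iff.1 (hf s (Nat.lt_succ_iff.1 hwt)) _ hsum
      ⟨i, by simpa [s]⟩)
  · intro hwt s hs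
    rw [Fintype.linearIndependent_iff]
    intro g hg
    set w : ι → R := fun i => if h : i ∈ s then g ⟨i, h⟩ else 0
    have hw : w ∈ LinearMap.ker (Fintype.linearCombination R f) := by
      rw [LinearMap.mem_ker, Fintype.linearCombination_apply, ← hg, univ_eq_attach,
        sum_attach_eq_sum_dite]
      simp only [w, dite_smul, zero_smul]
    have hsupp : hammingNorm w ≤ s.card :=
      card_le_card fun i hi => by by_contra h; simp [w, h] at hi
    have hw0 : w = 0 := by_contra fun h => by have := hwt w hw h; omega
    intro i
    simpa [w] using congrFun hw0 i

theorem AddMonoidHom.card_le_card_mul_card_ker {A B : Type*} [AddGroup A] [AddGroup B]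
    [Finite B] (φ : A →+ B) : Nat.card A ≤ Nat.card B * Nat.card φ.ker := by
  rw [← φ.ker.card_mul_index, AddSubgroup.index_ker, mul_comm]
  exact Nat.mul_le_mul_right _ (AddSubgroup.card_le_card_addGroup _)

section Plotkin

variable {ι G : Type*} [AddCommGroup G] [Finite G] [DecidableEq G]

theorem AddSubgroup.card_mul_card_filter_ne_zero_le (C : AddSubgroup (ι → G)) [Fintype C]
    (i : ι) : Nat.card G * #{c : C | (c : ι → G) i ≠ 0} ≤ Nat.card C * (Nat.card G - 1) := by
  let φ : C →+ G := (Pi.evalAddMonoidHom (fun _ => G) i).comp C.subtype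
  have hker : Nat.card φ.ker = #{c : C | (c : ι → G) i = 0} := by
    rw [← Fintype.card_subtype, ← Nat.card_eq_fintype_card]
    exact Nat.card_congr (Equiv.subtypeEquivRight fun c => φ.mem_ker)
  have hfiber : Nat.card C ≤ Nat.card G * #{c : C | (c : ι → G) i = 0} :=
    hker ▸ φ.card_le_card_mul_card_ker
  have hsplit :
      #{c : C | (c : ι → G) i = 0} + #{c : C | (c : ι → G) i ≠ 0} = Nat.card C := by
    rw [card_filter_add_card_filter_not, card_univ, Nat.card_eq_fintype_card]
  have hdistrib := congrArg (Nat.card G * ·) hsplit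
  simp only [mul_add] at hdistrib
  rw [Nat.mul_sub, mul_one, mul_comm (Nat.card C)]
  omega

theorem AddSubgroup.plotkin_bound [Fintype ι] (C : AddSubgroup (ι → G)) {d : ℕ}
    (hd : ∀ c ∈ C, c ≠ 0 → d ≤ hammingNorm c) :
    (Nat.card C - 1) * d * Nat.card G ≤ Fintype.card ι * Nat.card C * (Nat.card G - 1) := by
  classical
  have := Fintype.ofFinite C
  have hlower : (Nat.card C - 1) * d ≤ ∑ c : C, hammingNorm (c : ι → G) := by
    calc (Nat.card C - 1) * d = #(univ.erase (0 : C)) • d := by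
          rw [card_erase_of_mem (mem_univ _), card_univ, Nat.card_eq_fintype_card, smul_eq_mul]
      _ ≤ ∑ c ∈ univ.erase (0 : C), hammingNorm (c : ι → G) :=
          card_nsmul_le_sum (univ.erase 0) (fun c : C => hammingNorm (c : ι → G)) _
            fun c hc => hd c c.2 (by simpa using ne_of_mem_erase hc)
      _ ≤ ∑ c : C, hammingNorm (c : ι → G) := sum_le_sum_of_subset (erase_subset _ _)
  have hswap : ∑ c : C, hammingNorm (c : ι → G) = ∑ i, #{c : C | (c : ι → G) i ≠ 0} := by
    simp only [hammingNorm, card_filter]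
    exact sum_comm
  calc (Nat.card C - 1) * d * Nat.card G
      ≤ Nat.card G * ∑ i, #{c : C | (c : ι → G) i ≠ 0} := by
        rw [mul_comm, ← hswap]; exact Nat.mul_le_mul_left _ hlower
    _ = ∑ i, Nat.card G * #{c : C | (c : ι → G) i ≠ 0} := mul_sum _ _ _
    _ ≤ ∑ _i : ι, Nat.card C * (Nat.card G - 1) :=
        sum_le_sum fun i _ => C.card_mul_card_filter_ne_zero_le i
    _ = Fintype.card ι * Nat.card C * (Nat.card G - 1) := by
        rw [sum_const, card_univ, smul_eq_mul, mul_assoc]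

theorem Submodule.plotkin_bound_of_two_le_finrank {K : Type*} [Field K] [Finite K]
    [DecidableEq K] [Fintype ι] (C : Submodule K (ι → K)) (hC : 2 ≤ Module.finrank K C) {d : ℕ}
    (hd : ∀ c ∈ C, c ≠ 0 → d ≤ hammingNorm c) :
    (Nat.card K + 1) * d ≤ Nat.card K * Fintype.card ι := by
  have hq : 2 ≤ Nat.card K := Finite.one_lt_card
  have hX : Nat.card K ^ 2 ≤ Nat.card C := by
    rw [Module.natCard_eq_pow_finrank (K := K) (V := C)]
    exact Nat.pow_le_pow_right (by omega : 0 < Nat.card K) hC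
  -- `(X - 1) / X` increases with `X = |C|`, so `X ≥ q²` yields `(q² - 1) q d ≤ N q² (q - 1)`.
  have h := C.toAddSubgroup.plotkin_bound hd
  generalize Nat.card C = X at hX h
  generalize Nat.card K = q at hq hX h ⊢
  obtain ⟨r, rfl⟩ : ∃ r, q = r + 1 := ⟨q - 1, by omega⟩
  obtain ⟨Y, rfl⟩ : ∃ Y, X = Y + 1 :=
    ⟨X - 1, (Nat.sub_add_cancel ((Nat.one_le_pow _ _ (by omega)).trans hX)).symm⟩
  simp only [Nat.add_sub_cancel] at h
  by_contra! hlt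
  nlinarith [Nat.mul_le_mul_left (r * (Y + 1)) (Nat.succ_le_of_lt hlt),
    Nat.mul_le_mul_left (r + 1) h, Nat.mul_le_mul_left d hX]

end Plotkin

theorem SkeletonNondegenerate.plotkin_bound {K ι V : Type*} [Field K] [Finite K] [DecidableEq K]
    [Fintype ι] [AddCommGroup V] [Module K V] [FiniteDimensional K V] {k : ℕ} {f : ι → V}
    (hf : SkeletonNondegenerate K k f) (hV : Module.finrank K V + 2 ≤ Fintype.card ι) :
    (Nat.card K + 1) * (k + 2) ≤ Nat.card K * Fintype.card ι := by
  refine Submodule.plotkin_bound_of_two_le_finrank _ ?_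
    (skeletonNondegenerate_iff_hammingNorm.1 hf)
  have hrk := LinearMap.finrank_range_add_finrank_ker (Fintype.linearCombination K f)
  have hrange := Submodule.finrank_le (LinearMap.range (Fintype.linearCombination K f))
  rw [Module.finrank_fintype_fun_eq_card] at hrk
  omega

theorem eq_zero_of_det_ne_zero {K : Type*} [CommRing K] [NoZeroDivisors K] {a b x y x' y' : K}
    (hdet : x * y' - x' * y ≠ 0) (h : a * x + b * y = 0) (h' : a * x' + b * y' = 0) :
    a = 0 ∧ b = 0 :=
  ⟨(mul_eq_zero.1 (by linear_combination y' * h - y * h')).resolve_right hdet,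
    (mul_eq_zero.1 (by linear_combination x * h' - x' * h)).resolve_right hdet⟩

theorem Fin.card_filter_val_modEq_le (N : ℕ) {r : ℕ} (hr : 0 < r) (v : ℕ) :
    #{i : Fin N | (i : ℕ) ≡ v [MOD r]} ≤ N / r + 1 :=
  calc #{i : Fin N | (i : ℕ) ≡ v [MOD r]}
      = #(({i : Fin N | (i : ℕ) ≡ v [MOD r]} : Finset (Fin N)).map Fin.valEmbedding) :=
        (card_map _).symm
    _ ≤ #{x ∈ range N | x ≡ v [MOD r]} := card_le_card fun x hx => by
        simp only [mem_map, mem_filter, mem_univ, true_and, Fin.valEmbedding_apply] at hx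
        obtain ⟨i, hi, rfl⟩ := hx
        exact mem_filter.2 ⟨mem_range.2 i.2, hi⟩
    _ = N / r + if v % r < N % r then 1 else 0 := by
        rw [← Nat.count_eq_card_filter_range, Nat.count_modEq_card N hr]
    _ ≤ N / r + 1 := by split_ifs <;> omega

section ProjectiveLine

variable {p : ℕ} [Fact p.Prime]

/-- Representatives of the `p + 1` points of the projective line over `ZMod p`, indexed by
`r ≤ p`: `1 ↦ (0, 1)` and `r ↦ (1, r - 1)` otherwise; the truncated `0 - 1 = 0` gives
`0 ↦ (1, 0)`. -/
def projLinePoint (p r : ℕ) : ZMod p × ZMod p :=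
  if r = 1 then (0, 1) else (1, ((r - 1 : ℕ) : ZMod p))

theorem projLinePoint_det_ne_zero {r r' : ℕ} (hr : r ≤ p) (hr' : r' ≤ p) (hne : r ≠ r') :
    (projLinePoint p r).1 * (projLinePoint p r').2 - (projLinePoint p r').1 * (projLinePoint p r).2
      ≠ 0 := by
  unfold projLinePoint
  split_ifs with h h'
  · omega
  · simp
  · simp
  · rw [one_mul, one_mul, sub_ne_zero, Ne, ZMod.natCast_eq_natCast_iff' _ _ p,
      Nat.mod_eq_of_lt (by omega), Nat.mod_eq_of_lt (by omega)]
    omega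

theorem card_filter_projLinePoint_eq_zero_le {a b : ZMod p}
    (hab : ¬(a = 0 ∧ b = 0)) (N : ℕ) :
    #{i : Fin N | a * (projLinePoint p (i % (p + 1))).1 + b * (projLinePoint p (i % (p + 1))).2 = 0}
      ≤ N / (p + 1) + 1 := by
  rcases eq_empty_or_nonempty
    {i : Fin N | a * (projLinePoint p (i % (p + 1))).1 + b * (projLinePoint p (i % (p + 1))).2 = 0}
    with hZ | ⟨i₀, hi₀⟩
  · simp [hZ]
  refine le_trans (card_le_card fun i hi => ?_) (Fin.card_filter_val_modEq_le N p.succ_pos i₀)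
  simp only [mem_filter, mem_univ, true_and] at hi hi₀ ⊢
  by_contra hne
  have hlt (j : ℕ) : j % (p + 1) ≤ p := Nat.lt_succ_iff.1 (Nat.mod_lt _ p.succ_pos)
  exact hab (eq_zero_of_det_ne_zero (projLinePoint_det_ne_zero (hlt _) (hlt _) hne) hi hi₀)

end ProjectiveLine

section ParityCheck

variable {K : Type*} [CommRing K] {n : ℕ}

/-- The columns of the parity-check matrix `[-u' | -v' | I]` of the code spanned by `u` and `v`,
where `u'`, `v'` drop the first two entries. -/
def parityCheck (u v : Fin (n + 2) → K) (i : Fin (n + 2)) (j : Fin n) : K :=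
  (if i = j.succ.succ then 1 else 0) - (if i = 0 then u j.succ.succ else 0) -
    (if i = 1 then v j.succ.succ else 0)

theorem sum_smul_parityCheck (u v w : Fin (n + 2) → K) (j : Fin n) :
    (∑ i, w i • parityCheck u v i) j =
      w j.succ.succ - w 0 * u j.succ.succ - w 1 * v j.succ.succ := by
  simp [parityCheck, mul_sub, sum_sub_distrib, mul_ite]

theorem eq_of_mem_ker_parityCheck {u v : Fin (n + 2) → K} (hu0 : u 0 = 1) (hu1 : u 1 = 0)
    (hv0 : v 0 = 0) (hv1 : v 1 = 1) {w : Fin (n + 2) → K}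
    (hw : w ∈ LinearMap.ker (Fintype.linearCombination K (parityCheck u v))) :
    w = w 0 • u + w 1 • v := by
  rw [LinearMap.mem_ker, Fintype.linearCombination_apply] at hw
  funext i
  induction i using Fin.cases with
  | zero => simp [hu0, hv0]
  | succ i =>
    induction i using Fin.cases with
    | zero => simp [hu1, hv1]
    | succ j =>
      have := sum_smul_parityCheck u v w j
      rw [hw, Pi.zero_apply] at this
      simp only [Pi.add_apply, Pi.smul_apply, smul_eq_mul]
      linear_combination -this

end ParityCheck

theorem exists_skeletonNondegenerate {p n k : ℕ} [Fact p.Prime]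
    (h : (n + 2) / (p + 1) + k + 3 ≤ n + 2) :
    ∃ f : Fin (n + 2) → Fin n → ZMod p, SkeletonNondegenerate (ZMod p) k f := by
  set u : Fin (n + 2) → ZMod p := fun i => (projLinePoint p (i % (p + 1))).1
  set v : Fin (n + 2) → ZMod p := fun i => (projLinePoint p (i % (p + 1))).2
  have hp : 1 % (p + 1) = 1 := Nat.mod_eq_of_lt (by have := (Fact.out : p.Prime).one_lt; omega)
  refine ⟨parityCheck u v, skeletonNondegenerate_iff_hammingNorm.2 fun w hw hw0 => ?_⟩
  have hwuv := eq_of_mem_ker_parityCheck (by simp [u, projLinePoint])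
    (by simp [u, hp, projLinePoint]) (by simp [v, projLinePoint])
    (by simp [v, hp, projLinePoint]) hw
  have hab : ¬(w 0 = 0 ∧ w 1 = 0) := fun h => hw0 <| by
    rw [hwuv, h.1, h.2, zero_smul, zero_smul, add_zero]
  have hzeros : #{i | w i = 0} ≤ (n + 2) / (p + 1) + 1 := by
    convert card_filter_projLinePoint_eq_zero_le hab (n + 2) using 5 with i
    conv_lhs => rw [hwuv]
    rfl
  have hsplit := card_filter_add_card_filter_not (s := (univ : Finset (Fin (n + 2)))) (w · = 0)
  rw [card_univ, Fintype.card_fin] at hsplit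
  simp only [hammingNorm, ne_eq]
  omega

theorem stmt11_general (p m k : ℕ) (hp : p.Prime) (hm : 2 ≤ m)
    (hk : k % p = p - 1) :
    (∃ f : Fin (m + 1) → (Fin (m - 1) → ZMod p),
      ∀ s : Finset (Fin (m + 1)), s.card ≤ k + 1 →
        LinearIndependent (ZMod p) (fun i : s => f i.1)) ↔
    k + k / p + 3 ≤ m := by
  have := Fact.mk hp
  have hp2 := hp.two_le
  have hk1 : k + 1 = p * (k / p + 1) := by
    have := Nat.div_add_mod k p
    rw [mul_add, mul_one]
    omega
  generalize k / p = q at hk1 ⊢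
  obtain ⟨n, rfl⟩ : ∃ n, m = n + 1 := ⟨m - 1, by omega⟩
  constructor
  · rintro ⟨f, hf⟩
    have hbound := SkeletonNondegenerate.plotkin_bound (K := ZMod p) hf (by simp)
    simp only [Nat.card_zmod, Fintype.card_fin] at hbound
    by_contra! hlt
    nlinarith [Nat.mul_le_mul_left p (Nat.succ_le_of_lt hlt)]
  · intro h
    obtain ⟨d, rfl⟩ : ∃ d, n = k + d := ⟨n - k, by omega⟩
    refine exists_skeletonNondegenerate ?_
    have hdiv : (k + d + 2) / (p + 1) < d := by
      rw [Nat.div_lt_iff_lt_mul p.succ_pos]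
      nlinarith [Nat.mul_le_mul_left p (show q + 2 ≤ d by omega)]
    omega

/-- For `m ≥ 2`, `0 ≤ k ≤ m−1`, and `k % p = p−1`: there is a nondegenerate
simplicial map `Δ^m_(k) → X(F_p^{m−1})` iff `m ≥ k + ⌊k/p⌋ + 3`.
(Equivalently, `s_p(Δ^m_(k)) ≥ 2` iff `m ≥ k + ⌊k/p⌋ + 3`.) -/
theorem stmt11 (p m k : ℕ) (hp : p.Prime) (hm : 2 ≤ m) (hkm : k + 1 ≤ m)
    (hk : k % p = p - 1) :
    (∃ f : Fin (m + 1) → (Fin (m - 1) → ZMod p),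
      ∀ s : Finset (Fin (m + 1)), s.card ≤ k + 1 →
        LinearIndependent (ZMod p) (fun i : s => f i.1)) ↔
    k + k / p + 3 ≤ m :=
  stmt11_general p m k hp hm hk
end

section
/- Let p be a prime and m ≥ 2. Then there exists a nondegenerate simplicial map from Δ^m_(m−2) to X(F_p^{m−1}) (a function f : Fin (m+1) → (Fin (m−1) → ZMod p) such that for every finset s of Fin (m+1) with s.card ≤ m−1 the family (f i), i ∈ s, is linearly independent over ZMod p) if and only if m ≤ p. (Equivalently, s_p(Δ^m_(m−2)) = 1 if and only if m ≥ p+1.) -/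
/-!
Take the first `d` vectors as a basis `e` of the `d`-dimensional space and write the last two as
`x = ∑ aₖ eₖ`, `y = ∑ cₖ eₖ`. The linear relations among the `d + 2` vectors are then exactly
`α x + β y - ∑ (α aₖ + β cₖ) eₖ`, and every `d` of the vectors are independent iff no nonzero
relation has two vanishing coefficients, i.e. iff the `d + 2` points `(aₖ : cₖ)`, `(1 : 0)`,
`(0 : 1)` of the projective line are distinct. Over a field with `q` elements this forces the
ratios `aₖ / cₖ` to be `d` distinct units, so `d < q`; conversely distinct units `cₖ` together
with `aₖ = 1` give such a configuration.
-/

open Finset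

variable {K V ι : Type*}

variable (K) [Semiring K] [AddCommMonoid V] [Module K V] in
def GeneralPosition (r : ℕ) (f : ι → V) : Prop :=
  ∀ s : Finset ι, #s ≤ r → LinearIndepOn K f s

theorem GeneralPosition.linearIndependent_comp [Semiring K] [AddCommMonoid V] [Module K V]
    {ι' : Type*} [Fintype ι'] {r : ℕ} {f : ι → V} (hf : GeneralPosition K r f) {g : ι' → ι}
    (hg : Function.Injective g) (hcard : Fintype.card ι' ≤ r) : LinearIndependent K (f ∘ g) := by
  classical
  have := hf (univ.map ⟨g, hg⟩) (by simpa using hcard)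
  rw [coe_map, Function.Embedding.coeFn_mk, coe_univ, Set.image_univ] at this
  exact (linearIndepOn_range_iff hg f).mp this

section Ring

variable [Ring K] [AddCommGroup V] [Module K V]

theorem generalPosition_iff_of_card_eq_add_two [Fintype ι] {r : ℕ} {f : ι → V}
    (hι : Fintype.card ι = r + 2) :
    GeneralPosition K r f ↔ ∀ l : ι → K, ∑ i, l i • f i = 0 →
      ∀ i j, i ≠ j → l i = 0 → l j = 0 → l = 0 := by
  classical
  constructor
  · intro hf l hl i j hij hi hj
    have hs : #(univ \ {i, j}) ≤ r := by
      rw [card_sdiff_of_subset (subset_univ _), card_univ, hι, card_pair hij, Nat.add_sub_cancel]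
    have hsum : ∑ k ∈ univ \ {i, j}, l k • f k = 0 := by
      rw [← sum_sdiff (subset_univ {i, j}), sum_pair hij, hi, hj] at hl
      simpa using hl
    funext k
    by_cases hk : k = i ∨ k = j
    · obtain rfl | rfl := hk
      · exact hi
      · exact hj
    · exact linearIndepOn_finset_iff.mp (hf _ hs) l hsum k (by simpa using hk)
  · intro H s hs
    have hcompl : 1 < #sᶜ := by rw [card_compl, hι]; omega
    obtain ⟨i, hi, j, hj, hij⟩ := one_lt_card.mp hcompl
    rw [mem_compl] at hi hj
    rw [linearIndepOn_finset_iff]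
    intro g hg k hk
    have := congrFun (H (fun k => if k ∈ s then g k else 0) ?_ i j hij ?_ ?_) k
    · simpa [hk] using this
    · simpa [ite_smul] using hg
    · simp [hi]
    · simp [hj]

variable {d : ℕ}

/-- The coefficients of the relation `α • x + β • y - ∑ k, (α * a k + β * c k) • e k` among the
vectors `Fin.snoc (Fin.snoc e x) y`. -/
def relationCoeffs (a c : Fin d → K) (α β : K) : Fin (d + 2) → K :=
  Fin.snoc (Fin.snoc (fun k => -(α * a k + β * c k)) α) β

section relationCoeffs

variable (a c : Fin d → K) (α β : K)

@[simp]
theorem relationCoeffs_castSucc_castSucc (k : Fin d) :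
    relationCoeffs a c α β k.castSucc.castSucc = -(α * a k + β * c k) := by
  simp [relationCoeffs]

@[simp]
theorem relationCoeffs_castSucc_last : relationCoeffs a c α β (Fin.last d).castSucc = α := by
  simp [relationCoeffs]

@[simp]
theorem relationCoeffs_last : relationCoeffs a c α β (Fin.last (d + 1)) = β := by
  simp [relationCoeffs]

@[simp]
theorem relationCoeffs_zero_zero : relationCoeffs a c 0 0 = 0 := by
  funext i
  induction i using Fin.lastCases with
  | last => simp
  | cast i => induction i using Fin.lastCases <;> simp

end relationCoeffs

theorem sum_snoc_snoc_smul (g : Fin d → K) (α β : K) (e : Fin d → V) (x y : V) :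
    ∑ i, (Fin.snoc (Fin.snoc g α) β : Fin (d + 2) → K) i •
        (Fin.snoc (Fin.snoc e x) y : Fin (d + 2) → V) i =
      ∑ k, g k • e k + α • x + β • y := by
  simp [Fin.sum_univ_castSucc]

variable {e : Fin d → V} {x y : V} {a c : Fin d → K}

theorem sum_relationCoeffs_smul (hx : ∑ k, a k • e k = x) (hy : ∑ k, c k • e k = y) (α β : K) :
    ∑ i, relationCoeffs a c α β i • (Fin.snoc (Fin.snoc e x) y : Fin (d + 2) → V) i = 0 := by
  rw [relationCoeffs, sum_snoc_snoc_smul, ← hx, ← hy]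
  simp only [neg_smul, add_smul, smul_sum, smul_smul, sum_neg_distrib, sum_add_distrib]
  abel

theorem eq_relationCoeffs_of_sum_smul_eq_zero (he : LinearIndependent K e)
    (hx : ∑ k, a k • e k = x) (hy : ∑ k, c k • e k = y) {l : Fin (d + 2) → K}
    (hl : ∑ i, l i • (Fin.snoc (Fin.snoc e x) y : Fin (d + 2) → V) i = 0) :
    l = relationCoeffs a c (l (Fin.last d).castSucc) (l (Fin.last (d + 1))) := by
  set α := l (Fin.last d).castSucc
  set β := l (Fin.last (d + 1))
  set g : Fin d → K := Fin.init (Fin.init l)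
  have hl' : l = Fin.snoc (Fin.snoc g α) β := by
    change l = Fin.snoc (Fin.snoc (Fin.init (Fin.init l)) (Fin.init l (Fin.last d))) β
    rw [Fin.snoc_init_self, Fin.snoc_init_self]
  rw [hl', sum_snoc_snoc_smul, ← hx, ← hy] at hl
  have hg : ∀ k, g k + (α * a k + β * c k) = 0 := by
    refine Fintype.linearIndependent_iff.mp he _ ?_
    rw [← hl]
    simp only [add_smul, mul_smul, sum_add_distrib, smul_sum]
    abel
  rw [hl', relationCoeffs]
  congr
  funext k
  exact eq_neg_of_add_eq_zero_left (hg k)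

theorem generalPosition_snoc_snoc_iff (he : LinearIndependent K e)
    (hx : ∑ k, a k • e k = x) (hy : ∑ k, c k • e k = y) :
    GeneralPosition K d (Fin.snoc (Fin.snoc e x) y : Fin (d + 2) → V) ↔
      ∀ α β : K, ∀ i j, i ≠ j → relationCoeffs a c α β i = 0 → relationCoeffs a c α β j = 0 →
        α = 0 ∧ β = 0 := by
  rw [generalPosition_iff_of_card_eq_add_two (Fintype.card_fin _)]
  constructor
  · intro H α β i j hij hi hj
    have h0 := H _ (sum_relationCoeffs_smul hx hy α β) i j hij hi hj
    exact ⟨by simpa using congrFun h0 (Fin.last d).castSucc,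
      by simpa using congrFun h0 (Fin.last (d + 1))⟩
  · intro H l hl i j hij hi hj
    rw [eq_relationCoeffs_of_sum_smul_eq_zero he hx hy hl] at hi hj ⊢
    obtain ⟨hα, hβ⟩ := H _ _ i j hij hi hj
    rw [hα, hβ, relationCoeffs_zero_zero]

end Ring

theorem eq_zero_and_eq_zero_of_relationCoeffs_one [CommRing K] [NoZeroDivisors K] {d : ℕ}
    {c : Fin d → K}
    (hc : Function.Injective c) (hc0 : ∀ k, c k ≠ 0) {α β : K} {i j : Fin (d + 2)} (hij : i ≠ j)
    (hi : relationCoeffs (fun _ => 1) c α β i = 0) (hj : relationCoeffs (fun _ => 1) c α β j = 0) :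
    α = 0 ∧ β = 0 := by
  have hcases (i : Fin (d + 2)) : (∃ k : Fin d, i = k.castSucc.castSucc) ∨
      i = (Fin.last d).castSucc ∨ i = Fin.last (d + 1) := by
    induction i using Fin.lastCases with
    | last => simp
    | cast i => induction i using Fin.lastCases <;> simp
  rcases hcases i with ⟨k, rfl⟩ | rfl | rfl <;> rcases hcases j with ⟨k', rfl⟩ | rfl | rfl <;>
    simp at hi hj hij
  case inl.inl =>
    have hβ : β = 0 := by
      have : β * (c k - c k') = 0 := by linear_combination hj - hi
      exact (mul_eq_zero.mp this).resolve_right (sub_ne_zero.mpr (hc.ne hij))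
    exact ⟨by simpa [hβ] using hi, hβ⟩
  all_goals simp_all

section Field

variable [Field K] [AddCommGroup V] [Module K V] {d : ℕ}

theorem lt_card_of_relationCoeffs [Finite K] {a c : Fin d → K}
    (H : ∀ α β : K, ∀ i j, i ≠ j → relationCoeffs a c α β i = 0 →
      relationCoeffs a c α β j = 0 → α = 0 ∧ β = 0) :
    d < Nat.card K := by
  have hc : ∀ k, c k ≠ 0 := fun k hk =>
    one_ne_zero (H 0 1 k.castSucc.castSucc (Fin.last d).castSucc
      (by simp [Fin.ext_iff]; omega) (by simp [hk]) (by simp)).2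
  have ha : ∀ k, a k ≠ 0 := fun k hk =>
    one_ne_zero (H 1 0 k.castSucc.castSucc (Fin.last (d + 1))
      (by simp [Fin.ext_iff]; omega) (by simp [hk]) (by simp)).1
  let u : Fin d → Kˣ := fun k => Units.mk0 (a k / c k) (div_ne_zero (ha k) (hc k))
  have hu : Function.Injective u := by
    intro i j hij
    by_contra hne
    rw [Units.ext_iff, Units.val_mk0, Units.val_mk0, div_eq_div_iff (hc i) (hc j)] at hij
    refine hc i (H (c i) (-a i) i.castSucc.castSucc j.castSucc.castSucc
      (by simpa using hne) ?_ ?_).1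
    · simp only [relationCoeffs_castSucc_castSucc]; ring
    · simp only [relationCoeffs_castSucc_castSucc]; linear_combination hij
  calc d = Nat.card (Fin d) := (Nat.card_fin d).symm
    _ ≤ Nat.card Kˣ := Nat.card_le_card_of_injective u hu
    _ < Nat.card K := by rw [Nat.card_units]; exact Nat.sub_one_lt Nat.card_pos.ne'

theorem GeneralPosition.lt_card [Finite K] [FiniteDimensional K V] {f : Fin (d + 2) → V}
    (hV : Module.finrank K V = d) (hf : GeneralPosition K d f) : d < Nat.card K := by
  set e : Fin d → V := Fin.init (Fin.init f)
  have hfe : f = Fin.snoc (Fin.snoc e (f (Fin.last d).castSucc)) (f (Fin.last (d + 1))) := by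
    change f = Fin.snoc (Fin.snoc (Fin.init (Fin.init f)) (Fin.init f (Fin.last d))) _
    rw [Fin.snoc_init_self, Fin.snoc_init_self]
  have he : LinearIndependent K e :=
    hf.linearIndependent_comp ((Fin.castSucc_injective _).comp (Fin.castSucc_injective _))
      (by simp)
  have hspan := he.span_eq_top_of_card_eq_finrank' (by simp [hV])
  obtain ⟨a, hx⟩ := (Submodule.mem_span_range_iff_exists_fun K).mp
    (hspan ▸ Submodule.mem_top : f (Fin.last d).castSucc ∈ _)
  obtain ⟨c, hy⟩ := (Submodule.mem_span_range_iff_exists_fun K).mp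
    (hspan ▸ Submodule.mem_top : f (Fin.last (d + 1)) ∈ _)
  rw [hfe, generalPosition_snoc_snoc_iff he hx hy] at hf
  exact lt_card_of_relationCoeffs hf

theorem exists_generalPosition [Finite K] (hd : d < Nat.card K) :
    ∃ f : Fin (d + 2) → Fin d → K, GeneralPosition K d f := by
  classical
  have := Fintype.ofFinite K
  obtain ⟨u⟩ : Nonempty (Fin d ↪ Kˣ) := Function.Embedding.nonempty_of_card_le <| by
    rw [Fintype.card_fin, Fintype.card_units, ← Nat.card_eq_fintype_card]
    omega
  refine ⟨Fin.snoc (Fin.snoc (Pi.basisFun K (Fin d)) 1) fun k => u k, ?_⟩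
  rw [generalPosition_snoc_snoc_iff (a := fun _ => 1) (c := fun k => (u k : K))
    (Pi.basisFun K (Fin d)).linearIndependent (by ext; simp) (by ext; simp [Pi.single_apply])]
  exact fun α β i j hij => eq_zero_and_eq_zero_of_relationCoeffs_one
    (Units.val_injective.comp u.injective) (fun k => (u k).ne_zero) hij

end Field

/-- For `m ≥ 2`: there is a nondegenerate simplicial map
`Δ^m_(m−2) → X(F_p^{m−1})` iff `m ≤ p`.
(Equivalently, `s_p(Δ^m_(m−2)) = 1` iff `m ≥ p+1`.) -/
theorem stmt12 (p m : ℕ) (hp : p.Prime) (hm : 2 ≤ m) :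
    (∃ f : Fin (m + 1) → (Fin (m - 1) → ZMod p),
      ∀ s : Finset (Fin (m + 1)), s.card ≤ m - 1 →
        LinearIndependent (ZMod p) (fun i : s => f i.1)) ↔
    m ≤ p := by
  have := Fact.mk hp
  obtain ⟨d, rfl⟩ : ∃ d, m = d + 1 := ⟨m - 1, by omega⟩
  rw [Nat.add_one_le_iff]
  constructor
  · rintro ⟨f, hf⟩
    simpa using GeneralPosition.lt_card (Module.finrank_fin_fun _) hf
  · intro hd
    exact exists_generalPosition (by rwa [Nat.card_zmod])
end

section
/- There exists a nondegenerate simplicial map from X(F_2^4) to X(F_3^5): there is a function f : (Fin 4 → ZMod 2) → (Fin 5 → ZMod 3) such that for every finset s of vectors in (Fin 4 → ZMod 2) that is linearly independent over ZMod 2, the family (f v) for v ∈ s is linearly independent over ZMod 3. (Consequently s_3(X(F_2^4)) = 15 − 5 = 10.) -/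
/-!
Send `v ∈ 𝔽₂ⁿ` to `(ṽ, 1) ∈ 𝔽₃ⁿ⁺¹`, where `ṽ` is the lift of `v` with entries in `{0, 1}`.
Write an 𝔽₃-relation among the images of at most four 𝔽₂-independent vectors with integer
coefficients `aᵥ ∈ {-1, 0, 1}`; the last coordinate says that there are as many `1`s as `-1`s
modulo 3. If there are at most two of each, every coordinate of `∑ aᵥ ṽ` is an integer in
`[-2, 2]` divisible by 3, hence zero, and reducing mod 2 gives an 𝔽₂-relation, so all `aᵥ` are
even, i.e. zero. The only other case, three `1`s (or three `-1`s), falls to the same argument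
after rewriting one coefficient `1` as `-2`, which leaves two odd coefficients.
-/

open Finset

def binaryLift {n : ℕ} (v : Fin n → ZMod 2) : Fin n → ZMod 3 := fun j => ((v j).val : ZMod 3)

def coneLift {n : ℕ} (v : Fin n → ZMod 2) : Fin (n + 1) → ZMod 3 := Fin.snoc (binaryLift v) 1

lemma neg_negPart_le_mul_le_posPart {a x : ℤ} (hx₀ : 0 ≤ x) (hx₁ : x ≤ 1) :
    -a⁻ ≤ a * x ∧ a * x ≤ a⁺ := by
  obtain rfl | rfl : x = 0 ∨ x = 1 := by omega
  · simp [negPart_nonneg, posPart_nonneg]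
  · simpa using ⟨neg_le.mp (neg_le_negPart a), le_posPart a⟩

section

variable {n : ℕ} {s : Finset (Fin n → ZMod 2)}

lemma even_of_sum_smul_binaryLift_eq_zero
    (hs : LinearIndepOn (ZMod 2) id (s : Set (Fin n → ZMod 2))) {a : (Fin n → ZMod 2) → ℤ}
    (hpos : ∑ v ∈ s, (a v)⁺ ≤ 2) (hneg : ∑ v ∈ s, (a v)⁻ ≤ 2)
    (hrel : ∑ v ∈ s, (a v : ZMod 3) • binaryLift v = 0) : ∀ v ∈ s, Even (a v) := by
  have hint : ∀ j, ∑ v ∈ s, a v * (v j).val = 0 := by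
    intro j
    have hmod : ((∑ v ∈ s, a v * (v j).val : ℤ) : ZMod 3) = 0 := by
      simpa [binaryLift, Finset.sum_apply] using congrFun hrel j
    have hbound := fun v (_ : v ∈ s) =>
      neg_negPart_le_mul_le_posPart (a := a v) (x := (v j).val) (by positivity)
        (by have := ZMod.val_lt (v j); omega)
    have hle := sum_le_sum fun v hv => (hbound v hv).2
    have hge := sum_le_sum fun v hv => (hbound v hv).1
    rw [sum_neg_distrib] at hge
    rw [ZMod.intCast_zmod_eq_zero_iff_dvd] at hmod
    omega
  have hrel₂ : ∑ v ∈ s, (a v : ZMod 2) • v = 0 := by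
    ext j
    simpa [Finset.sum_apply] using congrArg (Int.cast : ℤ → ZMod 2) (hint j)
  exact fun v hv =>
    ZMod.intCast_eq_zero_iff_even.mp (linearIndepOn_finset_iff.mp hs _ hrel₂ v hv)

lemma false_of_sum_posPart_eq_three (hs : LinearIndepOn (ZMod 2) id (s : Set (Fin n → ZMod 2)))
    {a : (Fin n → ZMod 2) → ℤ} (ha : ∀ v ∈ s, |a v| ≤ 1) (hpos : ∑ v ∈ s, (a v)⁺ = 3)
    (hneg : ∑ v ∈ s, (a v)⁻ = 0) (hrel : ∑ v ∈ s, (a v : ZMod 3) • binaryLift v = 0) : False := by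
  classical
  obtain ⟨z, hz, hz_pos⟩ := exists_ne_zero_of_sum_ne_zero (hpos.trans_ne (by norm_num))
  have haz : a z = 1 := by
    have := abs_le.mp (ha z hz)
    rw [Ne, posPart_eq_zero, not_le] at hz_pos
    omega
  -- Replacing the coefficient `1` at `z` by `-2 ≡ 1 [ZMOD 3]` balances the relation.
  set b := Function.update a z (-2)
  have hb_erase : ∀ v ∈ s.erase z, b v = a v :=
    fun v hv => Function.update_of_ne (ne_of_mem_erase hv) _ _
  have hsplit : ∀ f : ℤ → ℤ, ∑ v ∈ s, f (b v) = f (-2) - f 1 + ∑ v ∈ s, f (a v) := by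
    intro f
    rw [← add_sum_erase s _ hz, ← add_sum_erase s (fun v => f (a v)) hz,
      sum_congr rfl fun v hv => congrArg f (hb_erase v hv)]
    simp only [b, Function.update_self, haz]
    ring
  have hb_cast : ∀ v, (b v : ZMod 3) = a v := by
    intro v
    by_cases hv : v = z
    · subst hv; simp only [b, Function.update_self, haz]; decide
    · simp [b, hv]
  have hb_pos : ∑ v ∈ s, (b v)⁺ = 2 := by simp [hsplit (·⁺), hpos]
  have hb_even := even_of_sum_smul_binaryLift_eq_zero hs hb_pos.le
    (by simp [hsplit (·⁻), hneg]) (by simp only [hb_cast, hrel])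
  obtain ⟨x, hx, hx_pos⟩ := exists_ne_zero_of_sum_ne_zero (hb_pos.trans_ne two_ne_zero)
  rw [Ne, posPart_eq_zero, not_le] at hx_pos
  have hxz : x ≠ z := by rintro rfl; simp [b] at hx_pos
  have hbx : b x = 1 := by
    have := abs_le.mp (ha x hx)
    rw [hb_erase x (mem_erase.mpr ⟨hxz, hx⟩)] at hx_pos ⊢
    omega
  exact Int.not_even_one (hbx ▸ hb_even x hx)

lemma eq_zero_of_sum_smul_binaryLift_eq_zero
    (hs : LinearIndepOn (ZMod 2) id (s : Set (Fin n → ZMod 2))) (hcard : #s ≤ 4)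
    {g : (Fin n → ZMod 2) → ZMod 3} (hsum : ∑ v ∈ s, g v = 0)
    (hrel : ∑ v ∈ s, g v • binaryLift v = 0) : ∀ v ∈ s, g v = 0 := by
  obtain ⟨a, ha, rfl⟩ :
      ∃ a : (Fin n → ZMod 2) → ℤ, (∀ v, |a v| ≤ 1) ∧ g = fun v => (a v : ZMod 3) := by
    refine ⟨fun v => (g v).valMinAbs, fun v => ?_, funext fun v => (ZMod.coe_valMinAbs _).symm⟩
    have := ZMod.natAbs_valMinAbs_le (g v)
    dsimp only
    rw [Int.abs_eq_natAbs]
    omega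
  have hP := sum_nonneg fun v (_ : v ∈ s) => posPart_nonneg (a v)
  have hN := sum_nonneg fun v (_ : v ∈ s) => negPart_nonneg (a v)
  have hPN : ∑ v ∈ s, (a v)⁺ + ∑ v ∈ s, (a v)⁻ ≤ 4 := by
    calc ∑ v ∈ s, (a v)⁺ + ∑ v ∈ s, (a v)⁻ = ∑ v ∈ s, |a v| := by
          simp only [← sum_add_distrib, posPart_add_negPart]
      _ ≤ ∑ v ∈ s, 1 := sum_le_sum fun v _ => ha v
      _ ≤ 4 := by simpa using hcard
  have hdvd : (3 : ℤ) ∣ ∑ v ∈ s, (a v)⁺ - ∑ v ∈ s, (a v)⁻ := by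
    rw [← sum_sub_distrib, ← Nat.cast_ofNat, ← ZMod.intCast_zmod_eq_zero_iff_dvd]
    simpa [posPart_sub_negPart] using hsum
  rcases (by omega : (∑ v ∈ s, (a v)⁺ ≤ 2 ∧ ∑ v ∈ s, (a v)⁻ ≤ 2) ∨
      (∑ v ∈ s, (a v)⁺ = 3 ∧ ∑ v ∈ s, (a v)⁻ = 0) ∨
      (∑ v ∈ s, (a v)⁻ = 3 ∧ ∑ v ∈ s, (a v)⁺ = 0)) with ⟨hP, hN⟩ | ⟨hP, hN⟩ | ⟨hN, hP⟩
  · intro v hv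
    have heven := Int.even_iff.mp (even_of_sum_smul_binaryLift_eq_zero hs hP hN hrel v hv)
    have := abs_le.mp (ha v)
    simp [show a v = 0 by omega]
  · exact (false_of_sum_posPart_eq_three hs (fun v _ => ha v) hP hN hrel).elim
  · refine (false_of_sum_posPart_eq_three hs (a := -a) (fun v _ => by simpa using ha v)
      (by simpa using hN) (by simpa using hP) ?_).elim
    simp [neg_smul, sum_neg_distrib, hrel]

lemma sum_eq_zero_and_sum_smul_binaryLift_eq_zero {g : (Fin n → ZMod 2) → ZMod 3}
    (h : ∑ v ∈ s, g v • coneLift v = 0) :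
    ∑ v ∈ s, g v = 0 ∧ ∑ v ∈ s, g v • binaryLift v = 0 := by
  refine ⟨by simpa [coneLift, Finset.sum_apply] using congrFun h (Fin.last n), funext fun j => ?_⟩
  simpa [coneLift, Finset.sum_apply] using congrFun h (Fin.castSucc j)

end

/-- There exists a nondegenerate simplicial map from `X(F_2^4)` to `X(F_3^5)`.
(Consequently `s_3(X(F_2^4)) = 15 − 5 = 10`.) -/
theorem stmt14 :
    ∃ f : (Fin 4 → ZMod 2) → (Fin 5 → ZMod 3),
      ∀ s : Finset (Fin 4 → ZMod 2),
        LinearIndependent (ZMod 2) (fun v : s => (v.1 : Fin 4 → ZMod 2)) →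
        LinearIndependent (ZMod 3) (fun v : s => f v.1) := by
  refine ⟨coneLift, fun s hs => linearIndepOn_finset_iff.mpr fun g hg => ?_⟩
  have hcard : #s ≤ 4 := by simpa using hs.fintype_card_le_finrank
  obtain ⟨hsum, hrel⟩ := sum_eq_zero_and_sum_smul_binaryLift_eq_zero hg
  exact eq_zero_of_sum_smul_binaryLift_eq_zero hs hcard hsum hrel
end

section
/- There is no nondegenerate simplicial map from X(F_3^4) to X(F_2^6): there is no function f : (Fin 4 → ZMod 3) → (Fin 6 → ZMod 2) such that for every finset s of vectors in (Fin 4 → ZMod 3) that is linearly independent over ZMod 3, the family (f v) for v ∈ s is linearly independent over ZMod 2. (Consequently s_2(X(F_3^4)) ≤ 80 − 7 = 73.) -/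
/-!
Restrict `f` to the 40 points of `PG(3, 3)`, represented by normalized vectors. Nondegeneracy
makes `f` injective with nonzero values there, and turns additive relations into incidences:
`f C = f A + f B` puts `C` on the line `AB`, and `f A + f B = f C + f D` makes the lines `AB` and
`CD` meet. Hence each of the 4-point lines carries at most one triple with zero image sum, so at
most half of the 1560 ordered pairs of distinct points have their image sum in the image of `f`.
The other (at least 780) sums lie among the at most 23 nonzero vectors missed by `f`, so some `s`
is the image sum of at least 34 pairs. The points `A` with `f A + s` in the image then pair up,
and the lines through the pairs meet pairwise, so they are all concurrent or all coplanar. A plane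
has only 13 points, and the lines through a point `x` carry at most two paired points each besides
`x`, at most 28 in all: either way fewer than 34.
-/

open Finset Module Submodule

section Lines

variable {K V : Type*} [Field K] [AddCommGroup V] [Module K V]

theorem linearIndepOn_pair_of_notMem_span {A B : V} (hA : A ≠ 0) (hB : B ∉ span K {A}) :
    LinearIndepOn K id {A, B} := by
  rw [Set.pair_comm]
  exact (LinearIndepOn.singleton (v := id) hA).id_insert hB

theorem ne_of_notMem_span_singleton {A B : V} (hB : B ∉ span K {A}) : A ≠ B :=
  fun h => hB (h ▸ mem_span_singleton_self A)

theorem finrank_span_pair_of_notMem_span {A B : V} (hA : A ≠ 0) (hB : B ∉ span K {A}) :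
    finrank K (span K {A, B}) = 2 := by
  classical
  have := finrank_span_finset_eq_card (s := {A, B})
    (by simpa using linearIndepOn_pair_of_notMem_span hA hB)
  rwa [coe_pair, card_pair (ne_of_notMem_span_singleton hB)] at this

theorem span_pair_eq_of_finrank_eq_two {U : Submodule K V} (hU : finrank K U = 2) {A B : V}
    (hA : A ∈ U) (hB : B ∈ U) (hA0 : A ≠ 0) (hAB : B ∉ span K {A}) : span K {A, B} = U := by
  have : FiniteDimensional K U := .of_finrank_pos (by omega)
  exact eq_of_le_of_finrank_eq (span_le.mpr (Set.pair_subset hA hB))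
    (by rw [finrank_span_pair_of_notMem_span hA0 hAB, hU])

variable [FiniteDimensional K V]

theorem Submodule.eq_of_le_of_ne_bot {N L : Submodule K V} (hle : N ≤ L) (hN : N ≠ ⊥)
    (hL : finrank K L ≤ 1) : N = L :=
  eq_of_le_of_finrank_le hle (hL.trans (one_le_finrank_iff.mpr hN))

theorem Submodule.finrank_inf_le_one {U P : Submodule K V} (hU : finrank K U = 2)
    (hUP : ¬ U ≤ P) : finrank K ↥(U ⊓ P) ≤ 1 := by
  have := finrank_lt_finrank_of_lt (inf_le_left.lt_of_ne fun h => hUP (inf_eq_left.mp h))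
  omega

theorem Submodule.concurrent_or_coplanar {S : Set (Submodule K V)} (hS : S.Nonempty)
    (h2 : ∀ U ∈ S, finrank K U = 2) (hmeet : ∀ U ∈ S, ∀ U' ∈ S, U ⊓ U' ≠ ⊥) :
    (∃ x ≠ (0 : V), ∀ U ∈ S, x ∈ U) ∨ ∃ P : Submodule K V, finrank K P = 3 ∧ ∀ U ∈ S, U ≤ P := by
  by_cases hall : ∀ U ∈ S, ∀ U' ∈ S, U = U'
  · obtain ⟨U₀, hU₀⟩ := hS
    obtain ⟨x, hx, hx0⟩ := exists_mem_ne_zero_of_ne_bot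
      (show U₀ ≠ ⊥ by rintro rfl; simpa using h2 ⊥ hU₀)
    exact .inl ⟨x, hx0, fun U hU => hall U₀ hU₀ U hU ▸ hx⟩
  push Not at hall
  obtain ⟨U₁, hU₁, U₂, hU₂, hne⟩ := hall
  have hℓ : finrank K ↥(U₁ ⊓ U₂) ≤ 1 := finrank_inf_le_one (h2 U₁ hU₁)
    fun h => hne (eq_of_le_of_finrank_eq h (by rw [h2 U₁ hU₁, h2 U₂ hU₂]))
  by_cases hP : ∀ U ∈ S, U ≤ U₁ ⊔ U₂
  · refine .inr ⟨U₁ ⊔ U₂, ?_, hP⟩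
    have := finrank_sup_add_finrank_inf_eq U₁ U₂
    have := one_le_finrank_iff.mpr (hmeet U₁ hU₁ U₂ hU₂)
    rw [h2 U₁ hU₁, h2 U₂ hU₂] at *
    omega
  push Not at hP
  obtain ⟨U₃, hU₃, hU₃P⟩ := hP
  have hout : ∀ U ∈ S, ¬ U ≤ U₁ ⊔ U₂ → U ⊓ (U₁ ⊔ U₂) = U₁ ⊓ U₂ := by
    intro U hU hUP
    have hUP1 := finrank_inf_le_one (h2 U hU) hUP
    have e₁ := eq_of_le_of_ne_bot (inf_le_inf_left U le_sup_left) (hmeet U hU U₁ hU₁) hUP1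
    have e₂ := eq_of_le_of_ne_bot (inf_le_inf_left U le_sup_right) (hmeet U hU U₂ hU₂) hUP1
    exact eq_of_le_of_ne_bot (le_inf (e₁ ▸ inf_le_right) (e₂ ▸ inf_le_right))
      (e₁ ▸ hmeet U hU U₁ hU₁) hℓ
  obtain ⟨x, hx, hx0⟩ := exists_mem_ne_zero_of_ne_bot (hmeet U₁ hU₁ U₂ hU₂)
  refine .inl ⟨x, hx0, fun U hU => ?_⟩
  by_cases hUP : U ≤ U₁ ⊔ U₂
  · have : U ⊓ U₃ = U₁ ⊓ U₂ := eq_of_le_of_ne_bot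
      ((inf_le_inf_right U₃ hUP).trans (by rw [inf_comm, hout U₃ hU₃ hU₃P]))
      (hmeet U hU U₃ hU₃) hℓ
    exact (this ▸ hx : x ∈ U ⊓ U₃).1
  · exact (hout U hU hUP ▸ hx : x ∈ U ⊓ (U₁ ⊔ U₂)).1

end Lines

section Nondegenerate

variable {K V W : Type*} [Field K] [AddCommGroup V] [Module K V] [AddCommGroup W]
  [Module (ZMod 2) W]

def IsNondegenerate (K : Type*) [Field K] [Module K V] (f : V → W) : Prop :=
  ∀ s : Finset V, LinearIndependent K (fun v : s => (v : V)) →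
    LinearIndependent (ZMod 2) (fun v : s => f v)

variable {f : V → W}

namespace IsNondegenerate

theorem sum_ne_zero (hf : IsNondegenerate K f) {s : Finset V}
    (hs : LinearIndepOn K id (s : Set V)) (hne : s.Nonempty) : ∑ v ∈ s, f v ≠ 0 := by
  intro hsum
  obtain ⟨a, ha⟩ := hne
  have h := Fintype.linearIndependent_iff.mp (hf s hs) (fun _ => 1)
    (by simpa [sum_attach s f] using hsum) ⟨a, ha⟩
  exact one_ne_zero h

theorem ne_zero (hf : IsNondegenerate K f) {v : V} (hv : v ≠ 0) : f v ≠ 0 := by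
  simpa using hf.sum_ne_zero (s := {v}) (by simpa using hv) (singleton_nonempty v)

theorem apply_ne_apply (hf : IsNondegenerate K f) {A B : V} (hA : A ≠ 0)
    (hB : B ∉ span K {A}) : f A ≠ f B := by
  classical
  intro h
  apply hf.sum_ne_zero (s := {A, B}) (by simpa using linearIndepOn_pair_of_notMem_span hA hB)
    (insert_nonempty A {B})
  rw [sum_pair (ne_of_notMem_span_singleton hB), h, ZModModule.add_self]

theorem mem_span_pair (hf : IsNondegenerate K f) {A B C : V} (hA : A ≠ 0)
    (hB : B ∉ span K {A}) (hC : f C = f A + f B) : C ∈ span K {A, B} := by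
  classical
  by_contra hCs
  have hCAB : C ∉ ({A, B} : Set V) := fun h => hCs (subset_span h)
  apply hf.sum_ne_zero (s := {C, A, B})
    (by simpa using (linearIndepOn_pair_of_notMem_span hA hB).id_insert hCs)
    (insert_nonempty _ _)
  rw [sum_insert (by simpa using hCAB), sum_pair (ne_of_notMem_span_singleton hB), ← hC,
    ZModModule.add_self]

theorem span_pair_inf_span_pair_ne_bot (hf : IsNondegenerate K f) {A B C D : V}
    (hA : A ≠ 0) (hB : B ∉ span K {A}) (hC : C ≠ 0) (hD : D ∉ span K {C})
    (hsum : f A + f B = f C + f D) : span K {A, B} ⊓ span K {C, D} ≠ ⊥ := by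
  classical
  have hB0 : B ≠ 0 := fun h => hB (h ▸ zero_mem _)
  intro hbot
  have hmem {x : V} (hx1 : x ∈ ({A, B} : Set V)) (hx2 : x ∈ ({C, D} : Set V)) : x = 0 := by
    rw [← mem_bot K, ← hbot]; exact ⟨subset_span hx1, subset_span hx2⟩
  have hdisj : Disjoint ({A, B} : Finset V) {C, D} := by
    rw [disjoint_left]
    intro x hx1 hx2
    have hx0 := hmem (by simpa using hx1) (by simpa using hx2)
    rcases mem_insert.mp hx1 with rfl | hx <;> simp_all
  apply hf.sum_ne_zero (s := {A, B} ∪ {C, D})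
    (by
      rw [coe_union, coe_pair, coe_pair]
      exact (linearIndepOn_pair_of_notMem_span hA hB).id_union
        (linearIndepOn_pair_of_notMem_span hC hD) (disjoint_iff.mpr hbot))
    (by simp)
  rw [sum_union hdisj, sum_pair (ne_of_notMem_span_singleton hB),
    sum_pair (ne_of_notMem_span_singleton hD), hsum, ZModModule.add_self]

end IsNondegenerate

end Nondegenerate

section Normalized

variable {K : Type*} [Field K] {n : ℕ}

def IsNormalized (v : Fin n → K) : Prop := ∃ i, v i = 1 ∧ ∀ j < i, v j = 0

theorem IsNormalized.ne_zero {v : Fin n → K} (hv : IsNormalized v) : v ≠ 0 := by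
  obtain ⟨i, hi, -⟩ := hv
  exact fun h => one_ne_zero (hi.symm.trans (congrFun h i))

theorem isNormalized_iff_of_lead {v : Fin n → K} {i : Fin n} (hi : v i ≠ 0)
    (hlt : ∀ j < i, v j = 0) : IsNormalized v ↔ v i = 1 := by
  refine ⟨fun ⟨i', hi', hlt'⟩ => ?_, fun h => ⟨i, h, hlt⟩⟩
  rcases lt_trichotomy i i' with h | rfl | h
  · exact absurd (hlt' i h) hi
  · exact hi'
  · exact absurd (hlt i' h) (by simp [hi'])

theorem IsNormalized.eq_one_of_smul {v : Fin n → K} {c : K} (hv : IsNormalized v)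
    (hcv : IsNormalized (c • v)) : c = 1 := by
  obtain ⟨i, hi, hlt⟩ := hv
  have hc : c ≠ 0 := by rintro rfl; exact hcv.ne_zero (zero_smul K v)
  simpa [hi] using (isNormalized_iff_of_lead (v := c • v) (i := i) (by simp [hi, hc])
    (fun j hj => by simp [hlt j hj])).mp hcv

theorem IsNormalized.notMem_span_singleton {A B : Fin n → K} (hA : IsNormalized A)
    (hB : IsNormalized B) (hAB : A ≠ B) : B ∉ span K {A} := by
  rintro hBA
  obtain ⟨c, rfl⟩ := mem_span_singleton.mp hBA
  rw [hA.eq_one_of_smul hB, one_smul] at hAB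
  exact hAB rfl

theorem isNormalized_two_smul_iff {v : Fin n → ZMod 3} (hv : v ≠ 0) :
    IsNormalized ((2 : ZMod 3) • v) ↔ ¬ IsNormalized v := by
  obtain ⟨i, hi : v i ≠ 0, hmin⟩ := WellFounded.has_min wellFounded_lt {i | v i ≠ 0}
    (Function.ne_iff.mp hv)
  have hlt : ∀ j < i, v j = 0 := fun j hj => not_not.mp fun h => hmin j h hj
  rw [isNormalized_iff_of_lead hi hlt, isNormalized_iff_of_lead (v := (2 : ZMod 3) • v) (i := i)
    (mul_ne_zero (by decide) hi) (fun j hj => by simp [hlt j hj])]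
  exact (by decide : ∀ a : ZMod 3, a ≠ 0 → (2 * a = 1 ↔ ¬ a = 1)) _ hi

-- one representative for each projective point of `U`
open scoped Classical in
noncomputable def points [Fintype K] (U : Submodule K (Fin n → K)) : Finset (Fin n → K) :=
  {v | v ∈ U ∧ IsNormalized v}

theorem mem_points [Fintype K] {U : Submodule K (Fin n → K)} {v : Fin n → K} :
    v ∈ points U ↔ v ∈ U ∧ IsNormalized v := by
  simp [points]

theorem points_mono [Fintype K] {U U' : Submodule K (Fin n → K)} (h : U ≤ U') :
    points U ⊆ points U' :=
  fun _ hv => mem_points.mpr ⟨h (mem_points.mp hv).1, (mem_points.mp hv).2⟩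

theorem two_mul_card_points_add_one (U : Submodule (ZMod 3) (Fin n → ZMod 3)) :
    2 * #(points U) + 1 = 3 ^ finrank (ZMod 3) U := by
  classical
  have two_smul_two_smul (v : Fin n → ZMod 3) : (2 : ZMod 3) • (2 : ZMod 3) • v = v := by
    rw [smul_smul, show (2 * 2 : ZMod 3) = 1 from rfl, one_smul]
  have hU : #(({v | v ∈ U} : Finset _).erase 0) + 1 = 3 ^ finrank (ZMod 3) U := by
    rw [card_erase_add_one (by simp [U.zero_mem]), ← Fintype.card_subtype,
      card_eq_pow_finrank (K := ZMod 3) (V := U), ZMod.card]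
  have hsplit : ({v | v ∈ U} : Finset _).erase 0 =
      points U ∪ (points U).image ((2 : ZMod 3) • ·) := by
    ext v
    simp only [mem_erase, mem_filter, mem_univ, true_and, mem_union, mem_image, mem_points]
    constructor
    · rintro ⟨hv0, hvU⟩
      by_cases hv : IsNormalized v
      · exact .inl ⟨hvU, hv⟩
      · exact .inr ⟨(2 : ZMod 3) • v,
          ⟨U.smul_mem _ hvU, (isNormalized_two_smul_iff hv0).mpr hv⟩, two_smul_two_smul v⟩
    · rintro (⟨hvU, hv⟩ | ⟨w, ⟨hwU, hw⟩, rfl⟩)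
      · exact ⟨hv.ne_zero, hvU⟩
      · exact ⟨smul_ne_zero (by decide) hw.ne_zero, U.smul_mem _ hwU⟩
  have hdisj : Disjoint (points U) ((points U).image ((2 : ZMod 3) • ·)) := by
    rw [disjoint_left]
    intro v hv hv'
    obtain ⟨w, hw, rfl⟩ := mem_image.mp hv'
    exact (isNormalized_two_smul_iff (mem_points.mp hw).2.ne_zero).mp (mem_points.mp hv).2
      (mem_points.mp hw).2
  rw [hsplit, card_union_of_disjoint hdisj,
    card_image_of_injective _ (smul_right_injective _ (by decide : (2 : ZMod 3) ≠ 0))] at hU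
  omega

theorem card_points (U : Submodule (ZMod 3) (Fin n → ZMod 3)) :
    #(points U) = (3 ^ finrank (ZMod 3) U - 1) / 2 := by
  have := two_mul_card_points_add_one U
  omega

theorem card_points_span_singleton {x : Fin n → ZMod 3} (hx : x ≠ 0) :
    #(points (span (ZMod 3) {x})) = 1 := by
  rw [card_points, finrank_span_singleton hx]; rfl

theorem card_points_span_pair {A B : Fin n → ZMod 3} (hA : A ≠ 0)
    (hB : B ∉ span (ZMod 3) {A}) : #(points (span (ZMod 3) {A, B})) = 4 := by
  rw [card_points, finrank_span_pair_of_notMem_span hA hB]; rfl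

theorem points_span_pair_eq [Fintype K] {A B C D : Fin n → K} (hA : A ≠ 0)
    (hB : B ∉ span K {A}) (hC : C ∈ points (span K {A, B})) (hD : D ∈ points (span K {A, B}))
    (hCD : C ≠ D) : points (span K {C, D}) = points (span K {A, B}) := by
  rw [span_pair_eq_of_finrank_eq_two (finrank_span_pair_of_notMem_span hA hB)
    (mem_points.mp hC).1 (mem_points.mp hD).1 (mem_points.mp hC).2.ne_zero
    ((mem_points.mp hC).2.notMem_span_singleton (mem_points.mp hD).2 hCD)]

theorem IsNondegenerate.injOn_points {W : Type*} [AddCommGroup W] [Module (ZMod 2) W]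
    [Fintype K] {f : (Fin n → K) → W} (hf : IsNondegenerate K f) :
    Set.InjOn f (points (⊤ : Submodule K (Fin n → K))) := by
  intro A hA B hB h
  by_contra hAB
  exact hf.apply_ne_apply (mem_points.mp hA).2.ne_zero
    ((mem_points.mp hA).2.notMem_span_singleton (mem_points.mp hB).2 hAB) h

end Normalized

section Counting

variable {α W : Type*} [DecidableEq α]

theorem card_le_two_of_involution {B : Finset α} {μ : α → α} (hB : #B ≤ 3)
    (hμB : ∀ A ∈ B, μ A ∈ B) (hμμ : ∀ A ∈ B, μ (μ A) = A) (hμne : ∀ A ∈ B, μ A ≠ A) :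
    #B ≤ 2 := by
  rcases B.eq_empty_or_nonempty with rfl | ⟨A, hA⟩
  · simp
  have hrest : #((B.erase A).erase (μ A)) ≤ 1 := by
    rw [card_erase_of_mem (mem_erase.mpr ⟨hμne A hA, hμB A hA⟩), card_erase_of_mem hA]
    omega
  have hmem : ∀ v ∈ B, v ≠ A → v ≠ μ A → v ∈ (B.erase A).erase (μ A) :=
    fun v hv h₁ h₂ => mem_erase.mpr ⟨h₂, mem_erase.mpr ⟨h₁, hv⟩⟩
  calc #B ≤ #({A, μ A} : Finset α) := card_le_card fun A' hA' => by
        by_contra h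
        simp only [mem_insert, mem_singleton, not_or] at h
        refine hμne A' hA' (card_le_one.mp hrest _ ?_ _ (hmem A' hA' h.1 h.2))
        refine hmem _ (hμB A' hA') (fun h' => h.2 ?_) (fun h' => h.1 ?_)
        · rw [← hμμ A' hA', h']
        · rw [← hμμ A' hA', h', hμμ A hA]
    _ ≤ 2 := card_le_two

variable [AddCommGroup W] [Module (ZMod 2) W] {ℓ : Finset α} {f : α → W}

theorem exists_eq_sum_of_eq_add (hℓ : #ℓ = 4) (hne : ∀ v ∈ ℓ, f v ≠ 0) {A B C : α}
    (hA : A ∈ ℓ) (hB : B ∈ ℓ) (hC : C ∈ ℓ) (hAB : A ≠ B) (hsum : f C = f A + f B) :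
    ∃ e ∈ ℓ, f e = ∑ v ∈ ℓ, f v ∧ e ≠ A ∧ e ≠ B := by
  have hCA : C ≠ A := by rintro rfl; exact hne B hB (by simpa using hsum)
  have hCB : C ≠ B := by rintro rfl; exact hne A hA (by simpa using hsum)
  have ht : ({A, B, C} : Finset α) ⊆ ℓ := by simp [insert_subset_iff, hA, hB, hC]
  have hcard : #({A, B, C} : Finset α) = 3 := by
    rw [card_insert_of_notMem (by simp [hAB, hCA.symm]), card_pair hCB.symm]
  obtain ⟨e, he⟩ := card_eq_one.mp (show #(ℓ \ {A, B, C}) = 1 by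
    rw [card_sdiff_of_subset ht, hℓ, hcard])
  have heℓ : e ∈ ℓ \ {A, B, C} := he ▸ mem_singleton_self e
  simp only [mem_sdiff, mem_insert, mem_singleton, not_or] at heℓ
  refine ⟨e, heℓ.1, ?_, heℓ.2.1, heℓ.2.2.1⟩
  rw [← sum_sdiff ht, he, sum_singleton, sum_insert (by simp [hAB, hCA.symm]),
    sum_pair hCB.symm, ← add_assoc (f A), ← hsum, ZModModule.add_self, add_zero]

theorem card_le_six_of_forall_eq_add (hℓ : #ℓ = 4) (hinj : Set.InjOn f ℓ)
    (hne : ∀ v ∈ ℓ, f v ≠ 0) {G : Finset (α × α)} (hG : G ⊆ ℓ.offDiag)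
    (hthird : ∀ p ∈ G, ∃ C ∈ ℓ, f C = f p.1 + f p.2) : #G ≤ 6 := by
  have key : ∀ p ∈ G, ∃ e ∈ ℓ, f e = ∑ v ∈ ℓ, f v ∧ e ≠ p.1 ∧ e ≠ p.2 := by
    intro p hp
    obtain ⟨hA, hB, hAB⟩ := mem_offDiag.mp (hG hp)
    obtain ⟨C, hC, hsum⟩ := hthird p hp
    exact exists_eq_sum_of_eq_add hℓ hne hA hB hC hAB hsum
  rcases G.eq_empty_or_nonempty with rfl | ⟨p₀, hp₀⟩
  · simp
  obtain ⟨e, heℓ, he, -⟩ := key p₀ hp₀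
  have hsub : G ⊆ (ℓ.erase e).offDiag := by
    intro p hp
    obtain ⟨e', he'ℓ, he', h1, h2⟩ := key p hp
    obtain rfl : e' = e := hinj he'ℓ heℓ (he'.trans he.symm)
    obtain ⟨hA, hB, hAB⟩ := mem_offDiag.mp (hG hp)
    exact mem_offDiag.mpr ⟨mem_erase.mpr ⟨h1.symm, hA⟩, mem_erase.mpr ⟨h2.symm, hB⟩, hAB⟩
  calc #G ≤ #(ℓ.erase e).offDiag := card_le_card hsub
    _ = 6 := by rw [offDiag_card, card_erase_of_mem heℓ, hℓ]

end Counting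

section ProjectiveSpace

local notation "𝔽₃⁴" => Fin 4 → ZMod 3
local notation "𝒫" => points (⊤ : Submodule (ZMod 3) 𝔽₃⁴)

theorem card_points_top : #𝒫 = 40 := by
  rw [card_points, finrank_top, finrank_fin_fun]; rfl

section Pairing

variable {M : Finset 𝔽₃⁴} {μ : 𝔽₃⁴ → 𝔽₃⁴} {x : 𝔽₃⁴}

open scoped Classical in
theorem card_filter_mem_span_pair_le_two {y : 𝔽₃⁴} (hx : x ≠ 0) (hy : y ∉ span (ZMod 3) {x})
    (hM : ∀ A ∈ M, IsNormalized A ∧ A ∉ span (ZMod 3) {x}) (hμM : ∀ A ∈ M, μ A ∈ M)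
    (hμμ : ∀ A ∈ M, μ (μ A) = A) (hμne : ∀ A ∈ M, μ A ≠ A)
    (hμx : ∀ A ∈ M, μ A ∈ span (ZMod 3) {x, A}) :
    #{A ∈ M | y ∈ span (ZMod 3) {x, A}} ≤ 2 := by
  set B := {A ∈ M | y ∈ span (ZMod 3) {x, A}}
  have hspan : ∀ A ∈ M, y ∈ span (ZMod 3) {x, A} → span (ZMod 3) {x, A} = span (ZMod 3) {x, y} :=
    fun A hA hyA => (span_pair_eq_of_finrank_eq_two
      (finrank_span_pair_of_notMem_span hx (hM A hA).2) (subset_span (by simp)) hyA hx hy).symm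
  have hBQ : B ⊆ points (span (ZMod 3) {x, y}) \ points (span (ZMod 3) {x}) := fun A hA => by
    obtain ⟨hAM, hyA⟩ := mem_filter.mp hA
    exact mem_sdiff.mpr ⟨mem_points.mpr ⟨hspan A hAM hyA ▸ subset_span (by simp), (hM A hAM).1⟩,
      fun h => (hM A hAM).2 (mem_points.mp h).1⟩
  refine card_le_two_of_involution ?_ (fun A hA => ?_) (fun A hA => hμμ A (mem_filter.mp hA).1)
    (fun A hA => hμne A (mem_filter.mp hA).1)
  · have := card_le_card hBQ
    rwa [card_sdiff_of_subset (points_mono (span_mono (by simp))), card_points_span_pair hx hy,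
      card_points_span_singleton hx] at this
  · obtain ⟨hAM, hyA⟩ := mem_filter.mp hA
    refine mem_filter.mpr ⟨hμM A hAM, ?_⟩
    rw [span_pair_eq_of_finrank_eq_two (finrank_span_pair_of_notMem_span hx (hM A hAM).2)
      (subset_span (by simp)) (hμx A hAM) hx (hM _ (hμM A hAM)).2]
    exact hyA

theorem card_le_of_forall_mem_span_pair_of_notMem (hx : x ≠ 0)
    (hM : ∀ A ∈ M, IsNormalized A ∧ A ∉ span (ZMod 3) {x}) (hμM : ∀ A ∈ M, μ A ∈ M)
    (hμμ : ∀ A ∈ M, μ (μ A) = A) (hμne : ∀ A ∈ M, μ A ≠ A)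
    (hμx : ∀ A ∈ M, μ A ∈ span (ZMod 3) {x, A}) : #M ≤ 26 := by
  classical
  set X := points (span (ZMod 3) {x})
  -- each `A ∈ M` is incident to the three points of the line `x A` other than `x`, and each
  -- point other than `x` to at most two elements of `M`
  have hcount : #M * 3 ≤ #(𝒫 \ X) * 2 := by
    refine card_mul_le_card_mul (fun A y => y ∈ span (ZMod 3) {x, A}) (fun A hA => ?_)
      (fun y hy => ?_)
    · calc 3 = #(points (span (ZMod 3) {x, A}) \ X) := by
            rw [card_sdiff_of_subset (points_mono (span_mono (by simp))),
              card_points_span_pair hx (hM A hA).2, card_points_span_singleton hx]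
        _ ≤ _ := card_le_card fun y hy => by
            obtain ⟨hyA, hyX⟩ := mem_sdiff.mp hy
            exact mem_filter.mpr ⟨mem_sdiff.mpr ⟨points_mono le_top hyA, hyX⟩,
              (mem_points.mp hyA).1⟩
    · obtain ⟨hyP, hyX⟩ := mem_sdiff.mp hy
      exact card_filter_mem_span_pair_le_two hx
        (fun h => hyX (mem_points.mpr ⟨h, (mem_points.mp hyP).2⟩)) hM hμM hμμ hμne hμx
  have hX : #(𝒫 \ X) = 39 := by
    rw [card_sdiff_of_subset (points_mono le_top), card_points_top,
      card_points_span_singleton hx]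
  omega

theorem card_le_of_forall_mem_span_pair (hx : x ≠ 0) (hM : ∀ A ∈ M, IsNormalized A)
    (hμM : ∀ A ∈ M, μ A ∈ M) (hμμ : ∀ A ∈ M, μ (μ A) = A) (hμne : ∀ A ∈ M, μ A ≠ A)
    (hxM : ∀ A ∈ M, x ∈ span (ZMod 3) {A, μ A}) : #M ≤ 28 := by
  classical
  set X := points (span (ZMod 3) {x})
  set M₂ := {A ∈ M | A ∉ span (ZMod 3) {x} ∧ μ A ∉ span (ZMod 3) {x}}
  have hsub : M ⊆ M₂ ∪ (X ∪ X.image μ) := by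
    intro A hA
    by_cases h₁ : A ∈ span (ZMod 3) {x}
    · exact mem_union_right _ (mem_union_left _ (mem_points.mpr ⟨h₁, hM A hA⟩))
    by_cases h₂ : μ A ∈ span (ZMod 3) {x}
    · exact mem_union_right _ (mem_union_right _ (mem_image.mpr
        ⟨μ A, mem_points.mpr ⟨h₂, hM _ (hμM A hA)⟩, hμμ A hA⟩))
    · exact mem_union_left _ (mem_filter.mpr ⟨hA, h₁, h₂⟩)
  have hM₂ : #M₂ ≤ 26 := by
    refine card_le_of_forall_mem_span_pair_of_notMem hx
      (fun A hA => ⟨hM A (mem_filter.mp hA).1, (mem_filter.mp hA).2.1⟩)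
      (fun A hA => ?_) (fun A hA => hμμ A (mem_filter.mp hA).1)
      (fun A hA => hμne A (mem_filter.mp hA).1) (fun A hA => ?_)
    · obtain ⟨hAM, hAx, hμAx⟩ := mem_filter.mp hA
      exact mem_filter.mpr ⟨hμM A hAM, hμAx, by rwa [hμμ A hAM]⟩
    · obtain ⟨hAM, hAx, -⟩ := mem_filter.mp hA
      have hAμ := (hM A hAM).notMem_span_singleton (hM _ (hμM A hAM)) (hμne A hAM).symm
      rw [span_pair_eq_of_finrank_eq_two (finrank_span_pair_of_notMem_span (hM A hAM).ne_zero hAμ)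
        (hxM A hAM) (subset_span (by simp)) hx hAx]
      exact subset_span (by simp)
  have := card_le_card hsub
  have := card_union_le M₂ (X ∪ X.image μ)
  have := card_union_le X (X.image μ)
  have := card_image_le (s := X) (f := μ)
  have : #X = 1 := card_points_span_singleton hx
  omega

end Pairing

variable {W : Type*} [AddCommGroup W] [Module (ZMod 2) W] [DecidableEq W] {f : 𝔽₃⁴ → W}

namespace IsNondegenerate

theorem two_mul_card_filter_add_mem_le (hf : IsNondegenerate (ZMod 3) f) :
    2 * #{p ∈ (𝒫).offDiag | f p.1 + f p.2 ∈ (𝒫).image f} ≤ #(𝒫).offDiag := by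
  classical
  set D := (𝒫).offDiag
  have hD : ∀ p ∈ D, IsNormalized p.1 ∧ IsNormalized p.2 ∧ p.1 ≠ p.2 := fun p hp => by
    obtain ⟨h₁, h₂, h₁₂⟩ := mem_offDiag.mp hp
    exact ⟨(mem_points.mp h₁).2, (mem_points.mp h₂).2, h₁₂⟩
  let line (p : 𝔽₃⁴ × 𝔽₃⁴) : Finset 𝔽₃⁴ := points (span (ZMod 3) {p.1, p.2})
  have hmaps : Set.MapsTo line D (D.image line) := fun p hp => mem_image_of_mem line hp
  -- sort the pairs by the line they span: of the 12 pairs on a line, at most 6 are counted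
  rw [card_eq_sum_card_fiberwise (hmaps.mono_left (coe_subset.mpr (filter_subset _ _))),
    card_eq_sum_card_fiberwise hmaps, mul_sum]
  refine sum_le_sum fun ℓ hℓ => ?_
  obtain ⟨p₀, hp₀, rfl⟩ := mem_image.mp hℓ
  obtain ⟨hp₀₁, hp₀₂, hp₀₁₂⟩ := hD p₀ hp₀
  have hp₀ := hp₀₁.notMem_span_singleton hp₀₂ hp₀₁₂
  have h4 : #(line p₀) = 4 := card_points_span_pair hp₀₁.ne_zero hp₀
  calc 2 * #{p ∈ {p ∈ D | f p.1 + f p.2 ∈ (𝒫).image f} | line p = line p₀}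
      ≤ 2 * 6 := by
        gcongr
        refine card_le_six_of_forall_eq_add h4 (hf.injOn_points.mono (points_mono le_top))
          (fun v hv => hf.ne_zero (mem_points.mp hv).2.ne_zero) (fun p hp => ?_) (fun p hp => ?_)
        · obtain ⟨⟨hpD, -⟩, hp⟩ := by simpa only [mem_filter] using hp
          obtain ⟨h₁, h₂, h₁₂⟩ := hD p hpD
          rw [← hp]
          exact mem_offDiag.mpr ⟨mem_points.mpr ⟨subset_span (by simp), h₁⟩,
            mem_points.mpr ⟨subset_span (by simp), h₂⟩, h₁₂⟩
        · obtain ⟨⟨hpD, hsum⟩, hp⟩ := by simpa only [mem_filter] using hp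
          obtain ⟨h₁, h₂, h₁₂⟩ := hD p hpD
          obtain ⟨C, hC, hCsum⟩ := mem_image.mp hsum
          refine ⟨C, hp ▸ mem_points.mpr ⟨?_, (mem_points.mp hC).2⟩, hCsum⟩
          exact hf.mem_span_pair h₁.ne_zero (h₁.notMem_span_singleton h₂ h₁₂) hCsum
    _ = #(line p₀).offDiag := by rw [offDiag_card, h4]
    _ ≤ #{p ∈ D | line p = line p₀} := card_le_card fun q hq => by
        obtain ⟨h₁, h₂, h₁₂⟩ := mem_offDiag.mp hq
        exact mem_filter.mpr ⟨mem_offDiag.mpr ⟨points_mono le_top h₁, points_mono le_top h₂, h₁₂⟩,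
          points_span_pair_eq hp₀₁.ne_zero hp₀ h₁ h₂ h₁₂⟩

theorem card_filter_add_eq_le (hf : IsNondegenerate (ZMod 3) f) (s : W) :
    #{p ∈ (𝒫).offDiag | f p.1 + f p.2 = s} ≤ #{A ∈ 𝒫 | f A + s ∈ (𝒫).image f} := by
  refine card_le_card_of_injOn Prod.fst (fun p hp => ?_) (fun p hp q hq hpq => ?_)
  · obtain ⟨hpD, rfl⟩ := mem_filter.mp (mem_coe.mp hp)
    obtain ⟨h₁, h₂, -⟩ := mem_offDiag.mp hpD
    refine mem_coe.mpr (mem_filter.mpr ⟨h₁, mem_image.mpr ⟨p.2, h₂, ?_⟩⟩)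
    rw [← add_assoc, ZModModule.add_self, zero_add]
  · obtain ⟨hpD, hps⟩ := mem_filter.mp (mem_coe.mp hp)
    obtain ⟨hqD, hqs⟩ := mem_filter.mp (mem_coe.mp hq)
    refine Prod.ext hpq (hf.injOn_points (mem_offDiag.mp hpD).2.1 (mem_offDiag.mp hqD).2.1 ?_)
    rw [← add_right_inj (f p.1), hps, hpq, hqs]

theorem exists_le_card_filter_add_mem [Fintype W] (hf : IsNondegenerate (ZMod 3) f)
    (hW : Fintype.card W ≤ 64) : ∃ s ≠ 0, 34 ≤ #{A ∈ 𝒫 | f A + s ∈ (𝒫).image f} := by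
  classical
  have hgood := hf.two_mul_card_filter_add_mem_le
  set T := (𝒫).image f
  have hT : #T = 40 := by rw [card_image_of_injOn hf.injOn_points, card_points_top]
  have hbad : 780 ≤ #{p ∈ (𝒫).offDiag | f p.1 + f p.2 ∉ T} := by
    have := card_filter_add_card_filter_not (s := (𝒫).offDiag) (fun p => f p.1 + f p.2 ∈ T)
    rw [offDiag_card, card_points_top] at *
    omega
  have hN : #((univ.erase 0) \ T) ≤ 23 := by
    have hTsub : T ⊆ univ.erase 0 := fun w hw => by
      obtain ⟨A, hA, rfl⟩ := mem_image.mp hw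
      exact mem_erase.mpr ⟨hf.ne_zero (mem_points.mp hA).2.ne_zero, mem_univ _⟩
    rw [card_sdiff_of_subset hTsub, card_erase_of_mem (mem_univ _), card_univ, hT]
    omega
  have hmaps : ∀ p ∈ {p ∈ (𝒫).offDiag | f p.1 + f p.2 ∉ T},
      f p.1 + f p.2 ∈ (univ.erase 0) \ T := by
    intro p hp
    obtain ⟨hpD, hpT⟩ := mem_filter.mp hp
    obtain ⟨h₁, h₂, h₁₂⟩ := mem_offDiag.mp hpD
    refine mem_sdiff.mpr ⟨mem_erase.mpr ⟨fun h => h₁₂ (hf.injOn_points h₁ h₂ ?_), mem_univ _⟩, hpT⟩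
    rwa [← ZModModule.sub_eq_add, sub_eq_zero] at h
  obtain ⟨s, hsN, hs⟩ := exists_lt_card_fiber_of_mul_lt_card_of_maps_to (n := 33) hmaps (by omega)
  refine ⟨s, (mem_erase.mp (mem_sdiff.mp hsN).1).1, hs.trans_le ?_⟩
  refine (card_le_card fun p hp => ?_).trans (hf.card_filter_add_eq_le s)
  obtain ⟨hp', hps⟩ := mem_filter.mp hp
  exact mem_filter.mpr ⟨(mem_filter.mp hp').1, hps⟩

theorem exists_involution_add_eq (hf : IsNondegenerate (ZMod 3) f) {s : W} (hs : s ≠ 0) :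
    ∃ μ : 𝔽₃⁴ → 𝔽₃⁴, ∀ A ∈ {A ∈ 𝒫 | f A + s ∈ (𝒫).image f},
      μ A ∈ {A ∈ 𝒫 | f A + s ∈ (𝒫).image f} ∧ μ (μ A) = A ∧ μ A ≠ A ∧ f A + f (μ A) = s := by
  refine ⟨fun A => Function.invFunOn f 𝒫 (f A + s), fun A hA => ?_⟩
  have hμ : ∀ A ∈ {A ∈ 𝒫 | f A + s ∈ (𝒫).image f},
      Function.invFunOn f 𝒫 (f A + s) ∈ 𝒫 ∧ f (Function.invFunOn f 𝒫 (f A + s)) = f A + s :=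
    fun A hA => by
      obtain ⟨B, hB, hBA⟩ := mem_image.mp (mem_filter.mp hA).2
      exact ⟨Function.invFunOn_mem ⟨B, hB, hBA⟩, Function.invFunOn_eq ⟨B, hB, hBA⟩⟩
  obtain ⟨hμP, hμf⟩ := hμ A hA
  have hμM : Function.invFunOn f 𝒫 (f A + s) ∈ {A ∈ 𝒫 | f A + s ∈ (𝒫).image f} :=
    mem_filter.mpr ⟨hμP, mem_image.mpr ⟨A, (mem_filter.mp hA).1,
      by rw [hμf, add_assoc, ZModModule.add_self, add_zero]⟩⟩
  refine ⟨hμM, hf.injOn_points (hμ _ hμM).1 (mem_filter.mp hA).1 ?_, fun h => hs ?_, ?_⟩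
  · rw [(hμ _ hμM).2, hμf, add_assoc, ZModModule.add_self, add_zero]
  · rwa [show Function.invFunOn f 𝒫 (f A + s) = A from h, left_eq_add] at hμf
  · rw [hμf, ← add_assoc, ZModModule.add_self, zero_add]

theorem card_filter_add_mem_le (hf : IsNondegenerate (ZMod 3) f) {s : W} (hs : s ≠ 0) :
    #{A ∈ 𝒫 | f A + s ∈ (𝒫).image f} ≤ 28 := by
  set M := {A ∈ 𝒫 | f A + s ∈ (𝒫).image f}
  rcases M.eq_empty_or_nonempty with hM | ⟨A₀, hA₀⟩
  · simp [hM]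
  obtain ⟨μ, hμ⟩ := hf.exists_involution_add_eq hs
  have hnorm : ∀ A ∈ M, IsNormalized A := fun A hA => (mem_points.mp (mem_filter.mp hA).1).2
  have hμA : ∀ A ∈ M, μ A ∉ span (ZMod 3) {A} := fun A hA =>
    (hnorm A hA).notMem_span_singleton (hnorm _ (hμ A hA).1) (hμ A hA).2.2.1.symm
  rcases concurrent_or_coplanar (S := (fun A => span (ZMod 3) {A, μ A}) '' M) ⟨_, A₀, hA₀, rfl⟩
    (by
      rintro _ ⟨A, hA, rfl⟩
      exact finrank_span_pair_of_notMem_span (hnorm A hA).ne_zero (hμA A hA))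
    (by
      rintro _ ⟨A, hA, rfl⟩ _ ⟨A', hA', rfl⟩
      exact hf.span_pair_inf_span_pair_ne_bot (hnorm A hA).ne_zero (hμA A hA)
        (hnorm A' hA').ne_zero (hμA A' hA') ((hμ A hA).2.2.2.trans (hμ A' hA').2.2.2.symm))
    with ⟨x, hx, hxM⟩ | ⟨P, hP, hMP⟩
  · exact card_le_of_forall_mem_span_pair hx hnorm (fun A hA => (hμ A hA).1)
      (fun A hA => (hμ A hA).2.1) (fun A hA => (hμ A hA).2.2.1) fun A hA => hxM _ ⟨A, hA, rfl⟩
  · calc #M ≤ #(points P) := card_le_card fun A hA =>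
          mem_points.mpr ⟨hMP _ ⟨A, hA, rfl⟩ (subset_span (by simp)), hnorm A hA⟩
      _ ≤ 28 := by rw [card_points, hP]; decide

end IsNondegenerate

end ProjectiveSpace

/-- There is no nondegenerate simplicial map from `X(F_3^4)` to `X(F_2^6)`.
(Consequently `s_2(X(F_3^4)) ≤ 80 − 7 = 73`.) -/
theorem stmt17 :
    ¬ ∃ f : (Fin 4 → ZMod 3) → (Fin 6 → ZMod 2),
      ∀ s : Finset (Fin 4 → ZMod 3),
        LinearIndependent (ZMod 3) (fun v : s => (v.1 : Fin 4 → ZMod 3)) →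
        LinearIndependent (ZMod 2) (fun v : s => f v.1) := by
  rintro ⟨f, hf⟩
  have hf : IsNondegenerate (ZMod 3) f := hf
  obtain ⟨s, hs, hlarge⟩ := hf.exists_le_card_filter_add_mem (by simp)
  have := hf.card_filter_add_mem_le hs
  omega
end

section
/- Let V be a type, K a family of finsets of V (the simplices of a simplicial complex on vertex set V), r a positive integer, and f : V → (Fin r → ZMod 2) a map such that for every s ∈ K the family (f v), v ∈ s, is linearly independent over ZMod 2. Let p be a prime with (p : ℝ) > (r+1)^((r+1)/2) / 2^r. Define f_p : V → (Fin r → ZMod p) by f_p v i = ((f v i).val : ZMod p) (reading the 0/1 coordinates of f v in ZMod p). Then for every s ∈ K the family (f_p v), v ∈ s, is linearly independent over ZMod p. (Consequently, for a simplicial complex K on m vertices, s_2(K) ≤ s_p(K) for all primes p > (m − s_2(K) + 1)^((m − s_2(K) + 1)/2) / 2^(m − s_2(K)).) -/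
/-!
Extend the independent vectors to a basis of `F_2^r` and let `M` be the `r × r` integer matrix
of 0/1 representatives of that basis. Since `M` is invertible mod 2, `det M` is odd, in
particular nonzero. Hadamard's bound for 0/1 matrices (obtained from the bound `n^(n/2)` for
`±1` matrices, itself AM-GM applied to the eigenvalues of `B Bᵀ`) gives
`|det M| ≤ (r+1)^((r+1)/2) / 2^r < p`, so `p ∤ det M` and the rows of `M` stay independent
mod `p`; the given vectors are among them.
-/

open Matrix

namespace Matrix

variable {m : Type*} [Fintype m] [DecidableEq m]

theorem PosSemidef.det_le_trace_div_card_pow {G : Matrix m m ℝ} (hG : G.PosSemidef) :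
    G.det ≤ (G.trace / Fintype.card m) ^ Fintype.card m := by
  obtain hm | hm := isEmpty_or_nonempty m
  · simp
  set n := Fintype.card m
  have hn : (0 : ℝ) < n := by exact_mod_cast Fintype.card_pos
  have hH := hG.isHermitian
  have hev : ∀ i, 0 ≤ hH.eigenvalues i := hG.eigenvalues_nonneg
  have amgm := Real.geom_mean_le_arith_mean_weighted Finset.univ (fun _ => 1 / (n : ℝ))
    hH.eigenvalues (fun _ _ => by positivity) (by simp [n]) (fun i _ => hev i)
  have htr : G.trace = ∑ i, hH.eigenvalues i := by simpa using hH.trace_eq_sum_eigenvalues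
  rw [← Finset.mul_sum, ← htr, one_div_mul_eq_div] at amgm
  calc G.det = ∏ i, hH.eigenvalues i := by simpa using hH.det_eq_prod_eigenvalues
    _ = (∏ i, hH.eigenvalues i ^ (1 / (n : ℝ))) ^ n := by
        rw [← Finset.prod_pow]
        refine Finset.prod_congr rfl fun i _ => ?_
        rw [← Real.rpow_mul_natCast (hev i), one_div_mul_cancel hn.ne', Real.rpow_one]
    _ ≤ (G.trace / n) ^ n :=
        pow_le_pow_left₀ (Finset.prod_nonneg fun i _ => Real.rpow_nonneg (hev i) _) amgm n

theorem abs_det_le_of_sq_eq_one {B : Matrix m m ℝ} (hB : ∀ i j, B i j ^ 2 = 1) :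
    |B.det| ≤ (Fintype.card m : ℝ) ^ ((Fintype.card m : ℝ) / 2) := by
  obtain hm | hm := isEmpty_or_nonempty m
  · simp
  set n := Fintype.card m
  have hG : (B * Bᵀ).PosSemidef := by
    simpa using posSemidef_self_mul_conjTranspose B
  have htr : (B * Bᵀ).trace = n * n := by
    simp [trace, mul_apply, ← sq, hB, n]
  have hsq : B.det ^ 2 ≤ (n : ℝ) ^ n := by
    have := hG.det_le_trace_div_card_pow
    rwa [htr, mul_div_cancel_left₀ _ (by positivity), det_mul, det_transpose, ← sq] at this
  calc |B.det| ≤ √((n : ℝ) ^ n) := Real.abs_le_sqrt hsq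
    _ = (n : ℝ) ^ ((n : ℝ) / 2) := by
        rw [Real.sqrt_eq_rpow, ← Real.rpow_natCast, ← Real.rpow_mul (Nat.cast_nonneg n),
          mul_one_div]

theorem two_pow_mul_abs_det_le_of_zero_one {M : Matrix m m ℝ}
    (hM : ∀ i j, M i j = 0 ∨ M i j = 1) :
    2 ^ Fintype.card m * |M.det| ≤
      ((Fintype.card m : ℝ) + 1) ^ (((Fintype.card m : ℝ) + 1) / 2) := by
  -- `J - 2M` (`J` all ones) bordered by ones: a `±1` matrix with Schur complement `-2 • M`.
  let B : Matrix (Unit ⊕ m) (Unit ⊕ m) ℝ :=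
    fromBlocks 1 (of fun _ _ => 1) (of fun _ _ => 1) (of fun i j => 1 - 2 * M i j)
  have hBdet : B.det = (-2) ^ Fintype.card m * M.det := by
    rw [det_fromBlocks_one₁₁, ← det_smul]
    congr 1
    ext i j
    simp [mul_apply]
  have hB : ∀ i j, B i j ^ 2 = 1 := by
    rintro (i | i) (j | j)
    · simp [B]
    · simp [B]
    · simp [B]
    · rcases hM i j with h | h <;> norm_num [B, h]
  have := abs_det_le_of_sq_eq_one hB
  rwa [hBdet, abs_mul, abs_pow, abs_neg, abs_two, Fintype.card_sum, Fintype.card_unit,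
    Nat.cast_add, Nat.cast_one, add_comm 1] at this

theorem linearIndependent_map_intCast_iff {K : Type*} [Field K] (M : Matrix m m ℤ) :
    LinearIndependent K (M.map ((↑) : ℤ → K)) ↔ (M.det : K) ≠ 0 := by
  rw [Int.cast_det, ← isUnit_iff_ne_zero, ← isUnit_iff_isUnit_det]
  exact linearIndependent_rows_iff_isUnit

end Matrix

theorem LinearIndependent.exists_basis_extension {K V ι n : Type*} [Field K] [AddCommGroup V]
    [Module K V] [FiniteDimensional K V] [Fintype n] {v : ι → V} (hv : LinearIndependent K v)
    (hn : Fintype.card n = Module.finrank K V) :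
    ∃ (b : Module.Basis n K V) (e : ι ↪ n), ∀ i, b (e i) = v i := by
  classical
  let b := Module.Basis.sumExtend hv
  let : Fintype (ι ⊕ Module.Basis.sumExtendIndex hv) := FiniteDimensional.fintypeBasisIndex b
  let σ := Fintype.equivOfCardEq (hn ▸ Module.finrank_eq_card_basis b).symm
  refine ⟨b.reindex σ, ⟨σ ∘ Sum.inl, σ.injective.comp Sum.inl_injective⟩, ?_⟩
  intro i
  simp only [Function.Embedding.coeFn_mk, Function.comp_apply, Module.Basis.reindex_apply,
    Equiv.symm_apply_apply, b, Module.Basis.sumExtend, Module.Basis.extend_apply_self]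
  rfl

theorem LinearIndependent.natCast_val_of_zmod_two {m : Type*} [Fintype m] [DecidableEq m]
    {g : m → m → ZMod 2} (hg : LinearIndependent (ZMod 2) g) {p : ℕ} [Fact p.Prime]
    (hp : ((Fintype.card m : ℝ) + 1) ^ (((Fintype.card m : ℝ) + 1) / 2) / 2 ^ Fintype.card m
      < p) :
    LinearIndependent (ZMod p) (fun i j => ((g i j).val : ZMod p)) := by
  let M : Matrix m m ℤ := of fun i j => (g i j).val
  have hM2 : M.map ((↑) : ℤ → ZMod 2) = g := by
    ext i j
    simp [M]
  have hdet2 : (M.det : ZMod 2) ≠ 0 := M.linearIndependent_map_intCast_iff.1 (hM2 ▸ hg)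
  have hM : ∀ i j, M.map ((↑) : ℤ → ℝ) i j = 0 ∨ M.map ((↑) : ℤ → ℝ) i j = 1 := by
    intro i j
    have := ZMod.val_lt (g i j)
    interval_cases h : (g i j).val <;> simp only [M, map_apply, of_apply, h] <;> norm_num
  have hbound : |M.det| < p := by
    have := two_pow_mul_abs_det_le_of_zero_one hM
    rw [← Int.cast_det, ← Int.cast_abs, ← le_div_iff₀' (by positivity)] at this
    exact_mod_cast this.trans_lt hp
  have hdetp : (M.det : ZMod p) ≠ 0 := fun h =>
    hdet2 (by rw [Int.eq_zero_of_abs_lt_dvd ((ZMod.intCast_zmod_eq_zero_iff_dvd _ _).1 h) hbound,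
      Int.cast_zero])
  have hMp : M.map ((↑) : ℤ → ZMod p) = fun i j => ((g i j).val : ZMod p) := by
    ext i j
    simp only [M, map_apply, of_apply, Int.cast_natCast]
  exact hMp ▸ M.linearIndependent_map_intCast_iff.2 hdetp

theorem stmt18_general {V : Type*} (K : Set (Finset V)) (r : ℕ)
    (f : V → (Fin r → ZMod 2))
    (hf : ∀ s ∈ K, LinearIndependent (ZMod 2) (fun v : s => f v.1))
    (p : ℕ) (hp : p.Prime)
    (hpbig : ((r : ℝ) + 1) ^ (((r : ℝ) + 1) / 2) / 2 ^ r < (p : ℝ)) :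
    ∀ s ∈ K, LinearIndependent (ZMod p)
      (fun v : s => (fun i => (((f v.1 i).val : ℕ) : ZMod p))) := by
  intro s hs
  have : Fact p.Prime := ⟨hp⟩
  obtain ⟨b, e, hbe⟩ := (hf s hs).exists_basis_extension (n := Fin r) (by simp)
  have hb := b.linearIndependent.natCast_val_of_zmod_two (p := p) (by simpa using hpbig)
  simp only [← hbe]
  exact hb.comp e e.injective

/-- If `f` is a nondegenerate simplicial map from `K` to `X(F_2^r)` and `p` is a
prime with `p > (r+1)^((r+1)/2) / 2^r` (Hadamard's bound), then reading the 0/1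
coordinates of `f` in `ZMod p` gives a nondegenerate simplicial map into
`X(F_p^r)`.  (Consequently `s_2(K) ≤ s_p(K)` for such primes `p`.) -/
theorem stmt18 {V : Type*} (K : Set (Finset V)) (r : ℕ) (hr : 1 ≤ r)
    (f : V → (Fin r → ZMod 2))
    (hf : ∀ s ∈ K, LinearIndependent (ZMod 2) (fun v : s => f v.1))
    (p : ℕ) (hp : p.Prime)
    (hpbig : ((r : ℝ) + 1) ^ (((r : ℝ) + 1) / 2) / 2 ^ r < (p : ℝ)) :
    ∀ s ∈ K, LinearIndependent (ZMod p)
      (fun v : s => (fun i => (((f v.1 i).val : ℕ) : ZMod p))) :=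
  stmt18_general K r f hf p hp hpbig
end

section
/- Let V be a type and K a family of finsets of V such that every s ∈ K has s.card ≤ 3 (a simplicial complex of dimension at most 2). Let f : V → (Fin m → ZMod 2) be a map such that for every s ∈ K the family (f v), v ∈ s, is linearly independent over ZMod 2. Let p be any prime and define f_p : V → (Fin m → ZMod p) by f_p v i = ((f v i).val : ZMod p) (reading the 0/1 coordinates of f v in ZMod p). Then for every s ∈ K the family (f_p v), v ∈ s, is linearly independent over ZMod p. (Consequently, s_2(K) ≤ s_p(K) for every prime p whenever dim K ≤ 2.) -/
/-!
Over a field, independent columns of a matrix contain a square submatrix with nonzero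
determinant, and over any commutative ring a square submatrix with unit determinant forces the
columns to be independent. Lift the 0/1 entries of such a minor over `ZMod 2` to `ℤ`: its
determinant is odd, while a 0/1 matrix of order at most 3 has determinant in `[-2, 2]`. So the
integer minor is `±1`, a unit in every `ZMod p`.
-/

open Matrix Module Submodule

theorem exists_isUnit_det_of_linearIndependent {K ι κ : Type*} [Field K] [Fintype ι]
    [Fintype κ] [DecidableEq κ] {g : κ → ι → K} (hg : LinearIndependent K g) :
    ∃ r : κ → ι, IsUnit (Matrix.of fun k l => g l (r k)).det := by
  let M : Matrix ι κ K := Matrix.of fun i k => g k i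
  have hspan : span K (Set.range M.row) = ⊤ := by
    apply eq_top_of_finrank_eq
    rw [← rank_eq_finrank_span_row, rank_eq_finrank_span_cols, finrank_fintype_fun_eq_card]
    exact finrank_span_eq_card hg
  obtain ⟨κ', a, -, hsp, hli⟩ := exists_linearIndependent' K M.row
  have : Fintype κ' := @Fintype.ofFinite _ hli.finite
  have hcard : Fintype.card κ = Fintype.card κ' := by
    rw [← finrank_fintype_fun_eq_card K, ← finrank_top K, ← hspan, ← hsp, finrank_span_eq_card hli]
  let e := Fintype.equivOfCardEq hcard
  refine ⟨a ∘ e, (isUnit_iff_isUnit_det _).mp (linearIndependent_rows_iff_isUnit.mp ?_)⟩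
  exact hli.comp e e.injective

theorem linearIndependent_of_isUnit_det {R ι κ : Type*} [CommRing R] [Fintype κ]
    [DecidableEq κ] {g : κ → ι → R} (r : κ → ι) (h : IsUnit (Matrix.of fun k l => g l (r k)).det) :
    LinearIndependent R g := by
  have hcols := linearIndependent_rows_of_isUnit
    ((isUnit_iff_isUnit_det _).mpr (by rwa [det_transpose]) :
      IsUnit (Matrix.of fun k l => g l (r k))ᵀ)
  exact LinearIndependent.of_comp (LinearMap.funLeft R R r) hcols

theorem Matrix.abs_det_map_val_le_two {n : ℕ} (hn : n ≤ 3) (A : Matrix (Fin n) (Fin n) (ZMod 2)) :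
    |(A.map fun x => (x.val : ℤ)).det| ≤ 2 := by
  interval_cases n
  · simp
  · rw [det_fin_one, map_apply]
    generalize A 0 0 = a
    revert a; decide
  · rw [det_fin_two]
    simp only [map_apply]
    generalize A 0 0 = a, A 0 1 = b, A 1 0 = c, A 1 1 = d
    revert a b c d; decide
  · rw [det_fin_three]
    simp only [map_apply]
    generalize A 0 0 = a, A 0 1 = b, A 0 2 = c, A 1 0 = d, A 1 1 = e, A 1 2 = f,
      A 2 0 = g, A 2 1 = h, A 2 2 = i
    revert a b c d e f g h i; decide

theorem Matrix.det_map_val_eq_intCast {n : Type*} [Fintype n] [DecidableEq n] {N : ℕ}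
    {R : Type*} [CommRing R] (A : Matrix n n (ZMod N)) :
    (A.map fun x => (x.val : R)).det = ((A.map fun x => (x.val : ℤ)).det : R) := by
  rw [← eq_intCast (Int.castRingHom R), RingHom.map_det]
  congr 1; ext i j; simp

theorem Matrix.isUnit_det_map_val {n : Type*} [Fintype n] [DecidableEq n]
    (hn : Fintype.card n ≤ 3) {R : Type*} [CommRing R]
    (A : Matrix n n (ZMod 2)) (hA : IsUnit A.det) :
    IsUnit (A.map fun x => (x.val : R)).det := by
  have hbound : |(A.map fun x => (x.val : ℤ)).det| ≤ 2 := by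
    have := abs_det_map_val_le_two hn (reindex (Fintype.equivFin n) (Fintype.equivFin n) A)
    rwa [reindex_apply, ← submatrix_map, ← reindex_apply, det_reindex_self] at this
  have hA' : A.map (fun x => ((x.val : ℕ) : ZMod 2)) = A := by ext; simp
  rw [← hA', det_map_val_eq_intCast] at hA
  rw [det_map_val_eq_intCast]
  generalize (A.map fun x => (x.val : ℤ)).det = D at hA hbound ⊢
  have hodd : ¬ ((2 : ℕ) : ℤ) ∣ D := (ZMod.intCast_zmod_eq_zero_iff_dvd D 2).not.mp hA.ne_zero
  obtain rfl | rfl : D = 1 ∨ D = -1 := by have := abs_le.mp hbound; omega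
  all_goals simp

theorem LinearIndependent.map_zmodTwo_val {R ι κ : Type*} [CommRing R] [Fintype ι] [Fintype κ]
    (hκ : Fintype.card κ ≤ 3) {g : κ → ι → ZMod 2} (hg : LinearIndependent (ZMod 2) g) :
    LinearIndependent R fun k i => ((g k i).val : R) := by
  classical
  obtain ⟨r, hr⟩ := exists_isUnit_det_of_linearIndependent hg
  exact linearIndependent_of_isUnit_det r (isUnit_det_map_val hκ _ hr)

theorem stmt19_general {V : Type*} (K : Set (Finset V)) (hK : ∀ s ∈ K, s.card ≤ 3)
    (m : ℕ) (f : V → (Fin m → ZMod 2))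
    (hf : ∀ s ∈ K, LinearIndependent (ZMod 2) (fun v : s => f v.1))
    (p : ℕ) :
    ∀ s ∈ K, LinearIndependent (ZMod p)
      (fun v : s => (fun i => (((f v.1 i).val : ℕ) : ZMod p))) := fun s hs =>
  (hf s hs).map_zmodTwo_val (by simpa using hK s hs)

/-- If `K` is a simplicial complex of dimension at most 2 and `f` is a
nondegenerate simplicial map from `K` to `X(F_2^m)`, then for any prime `p`,
reading the 0/1 coordinates of `f` in `ZMod p` gives a nondegenerate simplicial
map into `X(F_p^m)`.  (Consequently `s_2(K) ≤ s_p(K)` when `dim K ≤ 2`.) -/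
theorem stmt19 {V : Type*} (K : Set (Finset V)) (hK : ∀ s ∈ K, s.card ≤ 3)
    (m : ℕ) (f : V → (Fin m → ZMod 2))
    (hf : ∀ s ∈ K, LinearIndependent (ZMod 2) (fun v : s => f v.1))
    (p : ℕ) (hp : p.Prime) :
    ∀ s ∈ K, LinearIndependent (ZMod p)
      (fun v : s => (fun i => (((f v.1 i).val : ℕ) : ZMod p))) :=
  stmt19_general K hK m f hf p
end
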